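/- arXiv:2406.07891 — 7 statements merged into one kernel-verified Lean document; each statement's English description precedes it below -/
import Mathlib

section
/- Let (Ω, μ) be a measure space and let u, w, z, u_ℓ, u_u, w_ℓ, w_u : Ω → ℝ be measurable functions such that, μ-almost everywhere, u_ℓ ≤ u ≤ u_u, w_ℓ ≤ w ≤ w_u, z ≥ u_ℓ w + u w_ℓ − u_ℓ w_ℓ, and z ≤ u_u w + u w_ℓ − u_u w_ℓ. Then μ-almost everywhere |z(x)| ≤ 3 · max(|u_ℓ(x)|, |u_u(x)|) · max(|w_ℓ(x)|, |w_u(x)|). -/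
open MeasureTheory

theorem mccormick_z_pointwise_bound
    {Ω : Type*} [MeasurableSpace Ω] (μ : Measure Ω)
    (u w z ul uu wl wu : Ω → ℝ)
    (hu : Measurable u) (hw : Measurable w) (hz : Measurable z)
    (hul : Measurable ul) (huu : Measurable uu)
    (hwl : Measurable wl) (hwu : Measurable wu)
    (hub : ∀ᵐ x ∂μ, ul x ≤ u x ∧ u x ≤ uu x)
    (hwb : ∀ᵐ x ∂μ, wl x ≤ w x ∧ w x ≤ wu x)
    (hz1 : ∀ᵐ x ∂μ, z x ≥ ul x * w x + u x * wl x - ul x * wl x)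
    (hz3 : ∀ᵐ x ∂μ, z x ≤ uu x * w x + u x * wl x - uu x * wl x) :
    ∀ᵐ x ∂μ, |z x| ≤ 3 * max |ul x| |uu x| * max |wl x| |wu x| := by
  filter_upwards [hub, hwb, hz1, hz3] with x h1 h2 h3 h4
  set U := max |ul x| |uu x| with hUdef
  set W := max |wl x| |wu x| with hWdef
  have hU1 : |ul x| ≤ U := le_max_left _ _
  have hU2 : |uu x| ≤ U := le_max_right _ _
  have hW1 : |wl x| ≤ W := le_max_left _ _
  have hW2 : |wu x| ≤ W := le_max_right _ _
  have hUu : |u x| ≤ U := by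
    rw [abs_le]
    constructor
    · calc -U ≤ -|ul x| := by linarith
        _ ≤ ul x := neg_abs_le _
        _ ≤ u x := h1.1
    · exact h1.2.trans ((le_abs_self _).trans hU2)
  have hWw : |w x| ≤ W := by
    rw [abs_le]
    constructor
    · calc -W ≤ -|wl x| := by linarith
        _ ≤ wl x := neg_abs_le _
        _ ≤ w x := h2.1
    · exact h2.2.trans ((le_abs_self _).trans hW2)
  have hU0 : (0:ℝ) ≤ U := (abs_nonneg _).trans hU1
  have key : ∀ a b : ℝ, |a| ≤ U → |b| ≤ W → |a * b| ≤ U * W := by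
    intro a b ha hb
    rw [abs_mul]
    exact mul_le_mul ha hb (abs_nonneg _) hU0
  have p1 := abs_le.1 (key _ _ hU1 hWw)
  have p2 := abs_le.1 (key _ _ hUu hW1)
  have p3 := abs_le.1 (key _ _ hU1 hW1)
  have p4 := abs_le.1 (key _ _ hU2 hWw)
  have p5 := abs_le.1 (key _ _ hU2 hW1)
  rw [abs_le]
  constructor <;> nlinarith [p1.1, p1.2, p2.1, p2.2, p3.1, p3.2, p4.1, p4.2, p5.1, p5.2]
end

section
/- Let a < b be real numbers and let a = t_0 < t_1 < ⋯ < t_N = b be a partition of [a, b]. Let f : ℝ → ℝ be measurable, integrable on (a, b), and of finite pointwise total variation V on [a, b] (V is the supremum over all finite increasing sequences a ≤ s_0 < s_1 < ⋯ < s_K ≤ b of ∑_k |f(s_{k+1}) − f(s_k)|). For each i let m_i = (t_i − t_{i−1})^{−1} ∫_{t_{i−1}}^{t_i} f(x) dx be the mean of f over the i-th subinterval. Then ∑_{i=1}^{N−1} |m_{i+1} − m_i| ≤ V; that is, the total variation of the piecewise constant local average P_h f is at most the total variation of f. -/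
/-!
Writing the mean over `[t k, t (k + 1)]` as `∫ s in 0..1, f (lineMap (t k) (t (k + 1)) s)`, every
mean is an average of `f` along the same parameter `s`. For fixed `s` the points
`lineMap (t k) (t (k + 1)) s` are strictly increasing in `k` and stay in `[a, b]`, so the variation
of `f` along them is at most `V`; averaging these pointwise bounds over `s` bounds the variation of
the means, since `|∫ g - ∫ h| ≤ ∫ |g - h|`.
-/

open MeasureTheory AffineMap Finset

theorem IntervalIntegrable.comp_lineMap {f : ℝ → ℝ} {c d : ℝ}
    (hf : IntervalIntegrable f volume c d) :
    IntervalIntegrable (fun s => f (lineMap c d s)) volume 0 1 := by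
  rcases eq_or_ne c d with rfl | hcd
  · simp
  have := (hf.comp_add_right c).comp_mul_left (c := d - c)
  simpa [lineMap_apply_ring', sub_ne_zero.2 hcd.symm, mul_comm] using this

theorem inv_sub_mul_intervalIntegral_eq_integral_comp_lineMap (f : ℝ → ℝ) {c d : ℝ}
    (hcd : c ≠ d) :
    (d - c)⁻¹ * ∫ x in c..d, f x = ∫ s in (0 : ℝ)..1, f (lineMap c d s) := by
  simp_rw [lineMap_apply_ring', mul_comm _ (d - c)]
  rw [intervalIntegral.integral_comp_mul_add f (sub_ne_zero.2 hcd.symm)]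
  simp

theorem sum_abs_sub_integral_le {Ω : Type*} [MeasurableSpace Ω] {μ : Measure Ω}
    [IsProbabilityMeasure μ]
    {K : ℕ} {g : ℕ → Ω → ℝ} {V : ℝ} (hg : ∀ k ≤ K, Integrable (g k) μ)
    (hV : ∀ᵐ ω ∂μ, ∑ k ∈ range K, |g (k + 1) ω - g k ω| ≤ V) :
    ∑ k ∈ range K, |∫ ω, g (k + 1) ω ∂μ - ∫ ω, g k ω ∂μ| ≤ V := by
  have hdiff : ∀ k ∈ range K, Integrable (fun ω => |g (k + 1) ω - g k ω|) μ := fun k hk =>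
    ((hg (k + 1) (mem_range.1 hk)).sub (hg k (mem_range.1 hk).le)).abs
  calc ∑ k ∈ range K, |∫ ω, g (k + 1) ω ∂μ - ∫ ω, g k ω ∂μ|
      = ∑ k ∈ range K, |∫ ω, (g (k + 1) ω - g k ω) ∂μ| := by
        refine sum_congr rfl fun k hk => ?_
        rw [integral_sub (hg (k + 1) (mem_range.1 hk)) (hg k (mem_range.1 hk).le)]
    _ ≤ ∑ k ∈ range K, ∫ ω, |g (k + 1) ω - g k ω| ∂μ :=
        sum_le_sum fun k _ => abs_integral_le_integral_abs
    _ = ∫ ω, ∑ k ∈ range K, |g (k + 1) ω - g k ω| ∂μ := (integral_finsetSum _ hdiff).symm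
    _ ≤ ∫ _, V ∂μ := integral_mono_ae (integrable_finsetSum _ hdiff) (integrable_const V) hV
    _ = V := by simp

instance isProbabilityMeasure_restrict_Ioc_zero_one :
    IsProbabilityMeasure (volume.restrict (Set.Ioc (0 : ℝ) 1)) := ⟨by simp⟩

theorem tv_of_local_average_le_tv_general
    (a b : ℝ) (N : ℕ) (hN : 1 ≤ N)
    (t : ℕ → ℝ) (ht0 : t 0 = a) (htN : t N = b)
    (hmono : ∀ i < N, t i < t (i + 1))
    (f : ℝ → ℝ)
    (hfi : IntegrableOn f (Set.Ioo a b))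
    (V : ℝ)
    (hV : ∀ (K : ℕ) (s : ℕ → ℝ), (∀ k < K, s k < s (k + 1)) →
      a ≤ s 0 → s K ≤ b →
      ∑ k ∈ Finset.range K, |f (s (k + 1)) - f (s k)| ≤ V) :
    ∑ i ∈ Finset.Ico 1 N,
        |((t (i + 1) - t i)⁻¹ * ∫ x in (t i)..(t (i + 1)), f x) -
          ((t i - t (i - 1))⁻¹ * ∫ x in (t (i - 1))..(t i), f x)| ≤ V := by
  set g : ℕ → ℝ → ℝ := fun k s => f (lineMap (t k) (t (k + 1)) s)
  have ht : MonotoneOn t (Set.Iic N) := (strictMonoOn_Iic_of_lt_succ hmono).monotoneOn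
  have hint (k : ℕ) (hk : k < N) : IntervalIntegrable f volume (t k) (t (k + 1)) := by
    refine (((integrableOn_Icc_iff_integrableOn_Ioo).2 hfi).mono_set ?_).intervalIntegrable
    rw [Set.uIcc_of_le (hmono k hk).le, ← ht0, ← htN]
    exact Set.Icc_subset_Icc
      (ht (Set.mem_Iic.2 (Nat.zero_le _)) (Set.mem_Iic.2 hk.le) (Nat.zero_le _))
      (ht (Set.mem_Iic.2 hk) (Set.mem_Iic.2 le_rfl) hk)
  have hmean (k : ℕ) (hk : k < N) :
      (t (k + 1) - t k)⁻¹ * ∫ x in (t k)..(t (k + 1)), f x = ∫ s in Set.Ioc 0 1, g k s := by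
    rw [inv_sub_mul_intervalIntegral_eq_integral_comp_lineMap f (hmono k hk).ne,
      intervalIntegral.integral_of_le zero_le_one]
  calc _ = ∑ k ∈ range (N - 1),
        |(∫ s in Set.Ioc 0 1, g (k + 1) s) - ∫ s in Set.Ioc 0 1, g k s| := by
        rw [sum_Ico_eq_sum_range]
        refine sum_congr rfl fun k hk => ?_
        rw [mem_range] at hk
        rw [add_comm 1 k, Nat.add_sub_cancel, hmean k (by omega), hmean (k + 1) (by omega)]
    _ ≤ V := by
        refine sum_abs_sub_integral_le (fun k hk => ((hint k (by omega)).comp_lineMap).1)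
          ((ae_restrict_iff' measurableSet_Ioc).2 (Filter.Eventually.of_forall fun s hs => ?_))
        refine hV (N - 1) (fun k => lineMap (t k) (t (k + 1)) s) (fun k hk =>
          lineMap_strict_mono_endpoints (hmono k (by omega)) (hmono (k + 1) (by omega))
            hs.1.le hs.2) ?_ ?_
        · rw [← ht0]; exact (left_le_lineMap_iff_nonneg (hmono 0 (by omega))).2 hs.1.le
        · rw [← htN]
          simpa only [Nat.sub_add_cancel hN] using
            (lineMap_le_right_iff_le_one (hmono (N - 1) (by omega))).2 hs.2

theorem tv_of_local_average_le_tv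
    (a b : ℝ) (hab : a < b) (N : ℕ) (hN : 1 ≤ N)
    (t : ℕ → ℝ) (ht0 : t 0 = a) (htN : t N = b)
    (hmono : ∀ i < N, t i < t (i + 1))
    (f : ℝ → ℝ) (hfm : Measurable f)
    (hfi : IntegrableOn f (Set.Ioo a b))
    (V : ℝ)
    (hV : ∀ (K : ℕ) (s : ℕ → ℝ), (∀ k < K, s k < s (k + 1)) →
      a ≤ s 0 → s K ≤ b →
      ∑ k ∈ Finset.range K, |f (s (k + 1)) - f (s k)| ≤ V) :
    ∑ i ∈ Finset.Ico 1 N,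
        |((t (i + 1) - t i)⁻¹ * ∫ x in (t i)..(t (i + 1)), f x) -
          ((t i - t (i - 1))⁻¹ * ∫ x in (t (i - 1))..(t i), f x)| ≤ V :=
  tv_of_local_average_le_tv_general a b N hN t ht0 htN hmono f hfi V hV
end

section
/- Fix a partition 0 = t_0 < t_1 < ⋯ < t_N = 1 of [0,1]; for an integrable function g on (0,1) let P_h g be the piecewise constant function whose value on the i-th subinterval (t_{i−1}, t_i) is the mean m_i(g) = (t_i − t_{i−1})^{−1} ∫_{t_{i−1}}^{t_i} g. Let u : ℝ → ℝ be continuously differentiable on [0,1] with u(0) = u(1) = 0, and let w : (0,1) → ℝ be measurable with |w(x)| ≤ M for almost every x ∈ (0,1), where M ≥ 0. Then ∫_0^1 u′(x)² dx + ∫_0^1 (P_h w)(x) (P_h u)(x) u(x) dx ≥ (1 − M/π²) ∫_0^1 u′(x)² dx. -/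
open MeasureTheory Real

/-- The mean value of `g` over the `j`-th subinterval `(t (j-1), t j)`. -/
noncomputable def cellMean (t : ℕ → ℝ) (j : ℕ) (g : ℝ → ℝ) : ℝ :=
  (t j - t (j - 1))⁻¹ * ∫ x in (t (j - 1))..(t j), g x

/-- The piecewise constant local average of `g` on the partition
`0 = t 0 < t 1 < ⋯ < t N = 1`. -/
noncomputable def locAvg (t : ℕ → ℝ) (N : ℕ) (g : ℝ → ℝ) : ℝ → ℝ :=
  fun x => ∑ j ∈ Finset.Icc 1 N,
    Set.indicator (Set.Ioc (t (j - 1)) (t j)) (fun _ => cellMean t j g) x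

open Set Filter Topology

/-!
On a cell of the partition `P_h w` and `P_h u` are the constants `m(w)` and `m(u)`, so the cell
contributes `m(w) · |cell| · m(u)²` to the averaged term. Since `|m(w)| ≤ M` and, by Jensen,
`|cell| · m(u)² ≤ ∫_cell u²`, this is at least `-M ∫_cell u²`; summing over the cells and applying
the Poincaré inequality `π² ∫ u² ≤ ∫ u'²` gives the claim.

The Poincaré inequality follows from Picone's identity: if `φ > 0` solves `φ'' = -κ φ` on `[a, b]`,
then `u'² - κ u² = (u' - (φ'/φ) u)² + ((φ'/φ) u²)'`, whose last term integrates to zero when `u`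
vanishes at both ends. The functions `cos (k (x - (a + b) / 2))` with `0 < k < π / (b - a)` are
positive on `[a, b]`, and letting `k → π / (b - a)` gives the sharp constant.
-/

theorem mul_integral_sq_le_integral_deriv_sq_of_pos_solution {a b κ : ℝ} (hab : a ≤ b)
    {φ φ' u u' : ℝ → ℝ}
    (hφ : ∀ x ∈ Icc a b, HasDerivAt φ (φ' x) x)
    (hφ' : ∀ x ∈ Icc a b, HasDerivAt φ' (-(κ * φ x)) x)
    (hφ_pos : ∀ x ∈ Icc a b, 0 < φ x)
    (hu : ∀ x ∈ Icc a b, HasDerivAt u (u' x) x) (hu' : ContinuousOn u' (Icc a b))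
    (ha : u a = 0) (hb : u b = 0) :
    κ * ∫ x in a..b, u x ^ 2 ≤ ∫ x in a..b, u' x ^ 2 := by
  set c : ℝ → ℝ := fun x => φ' x / φ x with hc_def
  have hc : ∀ x ∈ Icc a b, HasDerivAt c (-κ - c x ^ 2) x := fun x hx =>
    ((hφ' x hx).div (hφ x hx) (hφ_pos x hx).ne').congr_deriv <| by
      rw [hc_def]; field_simp [(hφ_pos x hx).ne']
  have hc_cont : ContinuousOn c (Icc a b) := fun x hx =>
    (hc x hx).continuousAt.continuousWithinAt
  have hu_cont : ContinuousOn u (Icc a b) := fun x hx =>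
    (hu x hx).continuousAt.continuousWithinAt
  have hpicone : ∀ x ∈ uIcc a b, HasDerivAt (fun x => c x * u x ^ 2)
      (u' x ^ 2 - κ * u x ^ 2 - (u' x - c x * u x) ^ 2) x := by
    intro x hx
    rw [uIcc_of_le hab] at hx
    refine ((hc x hx).mul ((hu x hx).pow 2)).congr_deriv ?_
    simp only [Pi.pow_apply, Nat.cast_ofNat, Nat.add_one_sub_one, pow_one]
    ring
  have hint : ∀ f : ℝ → ℝ, ContinuousOn f (Icc a b) → IntervalIntegrable f volume a b :=
    fun f hf => hf.intervalIntegrable_of_Icc hab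
  have hftc := intervalIntegral.integral_eq_sub_of_hasDerivAt hpicone (hint _ (by fun_prop))
  rw [intervalIntegral.integral_sub (hint (fun x => u' x ^ 2 - κ * u x ^ 2) (by fun_prop))
      (hint _ (by fun_prop)),
    intervalIntegral.integral_sub (hint _ (by fun_prop)) (hint _ (by fun_prop)),
    intervalIntegral.integral_const_mul, ha, hb] at hftc
  have hsq : 0 ≤ ∫ x in a..b, (u' x - c x * u x) ^ 2 :=
    intervalIntegral.integral_nonneg hab fun x _ => sq_nonneg _
  linarith

theorem pi_div_sq_mul_integral_sq_le_integral_deriv_sq {a b : ℝ} (hab : a < b) {u u' : ℝ → ℝ}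
    (hu : ∀ x ∈ Icc a b, HasDerivAt u (u' x) x) (hu' : ContinuousOn u' (Icc a b))
    (ha : u a = 0) (hb : u b = 0) :
    (π / (b - a)) ^ 2 * ∫ x in a..b, u x ^ 2 ≤ ∫ x in a..b, u' x ^ 2 := by
  have hk : ∀ k ∈ Ioo 0 (π / (b - a)), k ^ 2 * ∫ x in a..b, u x ^ 2 ≤ ∫ x in a..b, u' x ^ 2 := by
    rintro k ⟨hk0, hkπ⟩
    have hlin : ∀ x, HasDerivAt (fun x => k * (x - (a + b) / 2)) k x := fun x => by
      simpa using ((hasDerivAt_id x).sub_const ((a + b) / 2)).const_mul k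
    refine mul_integral_sq_le_integral_deriv_sq_of_pos_solution hab.le
      (φ := fun x => cos (k * (x - (a + b) / 2)))
      (φ' := fun x => -(k * sin (k * (x - (a + b) / 2))))
      (fun x _ => ((hlin x).cos).congr_deriv (by ring))
      (fun x _ => (((hlin x).sin).const_mul k).neg.congr_deriv (by ring))
      (fun x hx => cos_pos_of_mem_Ioo ?_) hu hu' ha hb
    have hkb : k * (b - a) < π := (lt_div_iff₀ (sub_pos.2 hab)).1 hkπ
    have h₁ : 0 ≤ k * (x - a) := mul_nonneg hk0.le (by linarith [hx.1])
    have h₂ : k * (x - a) ≤ k * (b - a) := mul_le_mul_of_nonneg_left (by linarith [hx.2]) hk0.le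
    constructor <;> linarith
  have hlim : Tendsto (fun k : ℝ => k ^ 2 * ∫ x in a..b, u x ^ 2) (𝓝[<] (π / (b - a)))
      (𝓝 ((π / (b - a)) ^ 2 * ∫ x in a..b, u x ^ 2)) :=
    ((continuous_pow 2).mul continuous_const).continuousAt.tendsto.mono_left nhdsWithin_le_nhds
  exact le_of_tendsto hlim
    (eventually_of_mem (Ioo_mem_nhdsLT (div_pos pi_pos (sub_pos.2 hab))) hk)

noncomputable def intervalMean (a b : ℝ) (g : ℝ → ℝ) : ℝ :=
  (b - a)⁻¹ * ∫ x in a..b, g x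

theorem cellMean_succ (t : ℕ → ℝ) (k : ℕ) (g : ℝ → ℝ) :
    cellMean t (k + 1) g = intervalMean (t k) (t (k + 1)) g :=
  rfl

theorem sq_intervalMean_le_intervalMean_sq {a b : ℝ} (hab : a < b) {f : ℝ → ℝ}
    (hf : IntervalIntegrable f volume a b)
    (hf2 : IntervalIntegrable (fun x => f x ^ 2) volume a b) :
    intervalMean a b f ^ 2 ≤ intervalMean a b (fun x => f x ^ 2) := by
  have := (Even.convexOn_pow even_two).map_set_average_le (continuous_pow 2).continuousOn
    isClosed_univ (μ := volume) (t := Ioc a b) (by simp [hab]) (by simp) (by simp) hf.1 hf2.1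
  simpa only [intervalMean, setAverage_eq, smul_eq_mul, Real.volume_real_Ioc_of_le hab.le,
    ← intervalIntegral.integral_of_le hab.le] using this

theorem abs_intervalMean_le {a b M : ℝ} (hab : a < b) {g : ℝ → ℝ}
    (hg : ∀ᵐ x ∂volume.restrict (Ioo a b), |g x| ≤ M) :
    |intervalMean a b g| ≤ M := by
  rw [Measure.restrict_congr_set Ioo_ae_eq_Ioc, ae_restrict_iff' measurableSet_Ioc] at hg
  have := intervalIntegral.norm_integral_le_of_norm_le_const_ae (a := a) (b := b) (C := M)
    (f := g) (by simpa only [uIoc_of_le hab.le, Real.norm_eq_abs] using hg)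
  rw [Real.norm_eq_abs, abs_of_pos (sub_pos.2 hab)] at this
  rw [intervalMean, abs_mul, abs_inv, abs_of_pos (sub_pos.2 hab), inv_mul_le_iff₀ (sub_pos.2 hab)]
  linarith

theorem neg_mul_integral_sq_le_integral_mul_intervalMean_mul {a b c M : ℝ} (hab : a < b)
    (hc : |c| ≤ M) {f : ℝ → ℝ} (hf : IntervalIntegrable f volume a b)
    (hf2 : IntervalIntegrable (fun x => f x ^ 2) volume a b) :
    -(M * ∫ x in a..b, f x ^ 2) ≤ ∫ x in a..b, c * intervalMean a b f * f x := by
  set m := intervalMean a b f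
  have hl : 0 < b - a := sub_pos.2 hab
  have hq : 0 ≤ (b - a) * m ^ 2 := by positivity
  have hjensen : (b - a) * m ^ 2 ≤ ∫ x in a..b, f x ^ 2 :=
    (le_inv_mul_iff₀ hl).1 (sq_intervalMean_le_intervalMean_sq hab hf hf2)
  have hintegral : ∫ x in a..b, c * m * f x = c * ((b - a) * m ^ 2) := by
    rw [intervalIntegral.integral_const_mul, ← mul_inv_cancel_left₀ hl.ne' (∫ x in a..b, f x)]
    simp only [m, intervalMean]
    ring
  rw [hintegral]
  have hM : 0 ≤ M := (abs_nonneg c).trans hc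
  nlinarith [neg_abs_le c]

theorem locAvg_eq_cellMean {t : ℕ → ℝ} {N k : ℕ} (ht : MonotoneOn t (Iic N)) (hk : k < N)
    {x : ℝ} (hx : x ∈ Ioc (t k) (t (k + 1))) (g : ℝ → ℝ) :
    locAvg t N g x = cellMean t (k + 1) g := by
  rw [locAvg, Finset.sum_eq_single_of_mem (k + 1) (Finset.mem_Icc.2 ⟨by omega, hk⟩)]
  · exact indicator_of_mem hx _
  intro j hj hjk
  obtain ⟨hj1, hjN⟩ := Finset.mem_Icc.1 hj
  refine indicator_of_notMem (fun hxj => ?_) _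
  rcases lt_or_gt_of_ne hjk with h | h
  · have := ht (mem_Iic.2 hjN) (mem_Iic.2 hk.le) (show j ≤ k by omega)
    linarith [hxj.2, hx.1]
  · have := ht (mem_Iic.2 hk) (mem_Iic.2 (by omega)) (show k + 1 ≤ j - 1 by omega)
    linarith [hxj.1, hx.2]

theorem neg_mul_integral_sq_le_integral_locAvg_mul_locAvg_mul {N : ℕ} {t : ℕ → ℝ}
    (ht0 : t 0 = 0) (htN : t N = 1) (hmono : ∀ i < N, t i < t (i + 1)) {u : ℝ → ℝ}
    (hu : ContinuousOn u (Icc 0 1)) {M : ℝ} {w : ℝ → ℝ}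
    (hw : ∀ᵐ x ∂volume.restrict (Ioo 0 1), |w x| ≤ M) :
    -(M * ∫ x in (0 : ℝ)..1, u x ^ 2) ≤
      ∫ x in (0 : ℝ)..1, locAvg t N w x * locAvg t N u x * u x := by
  have ht : MonotoneOn t (Iic N) := (strictMonoOn_Iic_of_lt_succ hmono).monotoneOn
  have hcell : ∀ k < N, Icc (t k) (t (k + 1)) ⊆ Icc 0 1 := fun k hk =>
    Icc_subset_Icc (ht0 ▸ ht (mem_Iic.2 (Nat.zero_le N)) (mem_Iic.2 hk.le) (Nat.zero_le k))
      (htN ▸ ht (mem_Iic.2 hk) (mem_Iic.2 le_rfl) hk)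
  have heq : ∀ k < N, EqOn (fun x => locAvg t N w x * locAvg t N u x * u x)
      (fun x => cellMean t (k + 1) w * cellMean t (k + 1) u * u x) (uIoc (t k) (t (k + 1))) := by
    intro k hk x hx
    rw [uIoc_of_le (hmono k hk).le] at hx
    simp only [locAvg_eq_cellMean ht hk hx]
  have hint : ∀ k < N, ∀ f : ℝ → ℝ, ContinuousOn f (Icc 0 1) →
      IntervalIntegrable f volume (t k) (t (k + 1)) := fun k hk f hf =>
    (hf.mono (hcell k hk)).intervalIntegrable_of_Icc (hmono k hk).le
  have hf_int : ∀ k < N, IntervalIntegrable (fun x => locAvg t N w x * locAvg t N u x * u x)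
      volume (t k) (t (k + 1)) := fun k hk =>
    ((hint k hk u hu).const_mul _).congr (heq k hk).symm
  rw [← ht0, ← htN, ← intervalIntegral.sum_integral_adjacent_intervals hf_int,
    ← intervalIntegral.sum_integral_adjacent_intervals
      fun k hk => hint k hk (fun x => u x ^ 2) (hu.pow 2),
    Finset.mul_sum, ← Finset.sum_neg_distrib]
  refine Finset.sum_le_sum fun k hk => ?_
  rw [Finset.mem_range] at hk
  rw [intervalIntegral.integral_congr_ae (ae_of_all _ (heq k hk)), cellMean_succ, cellMean_succ]
  have hw_cell : |intervalMean (t k) (t (k + 1)) w| ≤ M :=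
    abs_intervalMean_le (hmono k hk) <| ae_restrict_of_ae_restrict_of_subset
      (Ioo_subset_Ioo (hcell k hk ⟨le_rfl, (hmono k hk).le⟩).1
        (hcell k hk ⟨(hmono k hk).le, le_rfl⟩).2) hw
  exact neg_mul_integral_sq_le_integral_mul_intervalMean_mul (hmono k hk) hw_cell
    (hint k hk u hu) (hint k hk _ (hu.pow 2))

theorem coercivity_averaged_bilinear_form_general
    (N : ℕ) (t : ℕ → ℝ)
    (ht0 : t 0 = 0) (htN : t N = 1) (hmono : ∀ i < N, t i < t (i + 1))
    (u u' : ℝ → ℝ)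
    (hu : ∀ x ∈ Set.Icc (0:ℝ) 1, HasDerivAt u (u' x) x)
    (hu'c : ContinuousOn u' (Set.Icc 0 1))
    (hu0 : u 0 = 0) (hu1 : u 1 = 0)
    (M : ℝ) (hM : 0 ≤ M)
    (w : ℝ → ℝ)
    (hwb : ∀ᵐ x ∂(volume.restrict (Set.Ioo (0:ℝ) 1)), |w x| ≤ M) :
    (∫ x in (0:ℝ)..1, u' x ^ 2) +
      ∫ x in (0:ℝ)..1, locAvg t N w x * locAvg t N u x * u x ≥
      (1 - M / π ^ 2) * ∫ x in (0:ℝ)..1, u' x ^ 2 := by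
  have hpoincare := pi_div_sq_mul_integral_sq_le_integral_deriv_sq zero_lt_one hu hu'c hu0 hu1
  rw [sub_zero, div_one] at hpoincare
  have hcells := neg_mul_integral_sq_le_integral_locAvg_mul_locAvg_mul ht0 htN hmono
    (fun x hx => (hu x hx).continuousAt.continuousWithinAt) hwb
  have hM_term : M * ∫ x in (0:ℝ)..1, u x ^ 2 ≤ M / π ^ 2 * ∫ x in (0:ℝ)..1, u' x ^ 2 := by
    rw [div_mul_eq_mul_div, le_div_iff₀ (by positivity), mul_assoc]
    exact mul_le_mul_of_nonneg_left (by linarith) hM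
  linarith

theorem coercivity_averaged_bilinear_form
    (N : ℕ) (hN : 1 ≤ N) (t : ℕ → ℝ)
    (ht0 : t 0 = 0) (htN : t N = 1) (hmono : ∀ i < N, t i < t (i + 1))
    (u u' : ℝ → ℝ)
    (hu : ∀ x ∈ Set.Icc (0:ℝ) 1, HasDerivAt u (u' x) x)
    (hu'c : ContinuousOn u' (Set.Icc 0 1))
    (hu0 : u 0 = 0) (hu1 : u 1 = 0)
    (M : ℝ) (hM : 0 ≤ M)
    (w : ℝ → ℝ) (hwm : Measurable w)
    (hwb : ∀ᵐ x ∂(volume.restrict (Set.Ioo (0:ℝ) 1)), |w x| ≤ M) :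
    (∫ x in (0:ℝ)..1, u' x ^ 2) +
      ∫ x in (0:ℝ)..1, locAvg t N w x * locAvg t N u x * u x ≥
      (1 - M / π ^ 2) * ∫ x in (0:ℝ)..1, u' x ^ 2 :=
  coercivity_averaged_bilinear_form_general N t ht0 htN hmono u u' hu hu'c hu0 hu1 M hM w hwb
end

section
/- Let w_ℓ be a real constant with w_ℓ > −π², let w, f : [0,1] → ℝ be continuous with w(x) ≥ w_ℓ for all x, and let u₁, u₂ : ℝ → ℝ be twice continuously differentiable on [0,1] with u₁(0) = u₁(1) = u₂(0) = u₂(1) = 0, satisfying −u₁″(x) + w(x) u₁(x) = f(x) and −u₂″(x) + w(x) u₂(x) = f(x) for all x ∈ [0,1]. Then u₁(x) = u₂(x) for all x ∈ [0,1]. -/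
/-!
Suppose `v = u₁ - u₂`, a solution of `v'' = w v` vanishing at `0` and `1`, were positive somewhere.
Then it is positive on a nodal interval `(b, a) ⊆ [0, 1]` with `v b = v a = 0`. Compare `v` with the
first Dirichlet eigenfunction `sin (π x)` through their Wronskian
`W = v' sin (π x) - v π cos (π x)`: since `W' = (w + π²) v sin (π x) > 0` on `(b, a)`, `W` is strictly
increasing, whereas `W b = v' b sin (π b) ≥ 0 ≥ v' a sin (π a) = W a` because `v` leaves its zero at
`b` upwards and returns to zero at `a` from above. Hence `v ≤ 0`, and by symmetry `v = 0`.
-/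

open Real Set

lemma IsMinOn.hasDerivAt_nonneg_of_left {v : ℝ → ℝ} {d b a : ℝ} (hmin : IsMinOn v (Icc b a) b)
    (hab : b < a) (hd : HasDerivAt v d b) : 0 ≤ d := by
  have hcone : a - b ∈ posTangentConeAt (Icc b a) b :=
    sub_mem_posTangentConeAt_of_segment_subset (segment_eq_Icc hab.le ▸ Subset.rfl)
  exact nonneg_of_mul_nonneg_right
    (by simpa using hmin.localize.hasFDerivWithinAt_nonneg hd.hasFDerivAt.hasFDerivWithinAt hcone)
    (sub_pos.2 hab)

lemma IsMinOn.hasDerivAt_nonpos_of_right {v : ℝ → ℝ} {d b a : ℝ} (hmin : IsMinOn v (Icc b a) a)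
    (hab : b < a) (hd : HasDerivAt v d a) : d ≤ 0 := by
  have hcone : b - a ∈ posTangentConeAt (Icc b a) a :=
    sub_mem_posTangentConeAt_of_segment_subset (by rw [segment_symm, segment_eq_Icc hab.le])
  exact nonpos_of_mul_nonneg_right
    (by simpa using hmin.localize.hasFDerivWithinAt_nonneg hd.hasFDerivAt.hasFDerivWithinAt hcone)
    (sub_neg.2 hab)

lemma exists_first_zero_of_pos {v : ℝ → ℝ} {x₀ r : ℝ} (hv : ContinuousOn v (Icc x₀ r))
    (hx₀r : x₀ ≤ r) (h₀ : 0 < v x₀) (hr : v r ≤ 0) :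
    ∃ a ∈ Ioc x₀ r, v a = 0 ∧ ∀ x ∈ Ico x₀ a, 0 < v x := by
  set S := Icc x₀ r ∩ v ⁻¹' Iic 0
  have hS : IsClosed S := hv.preimage_isClosed_of_isClosed isClosed_Icc isClosed_Iic
  have hSne : S.Nonempty := ⟨r, ⟨hx₀r, le_rfl⟩, hr⟩
  have hSbdd : BddBelow S := ⟨x₀, fun x hx => hx.1.1⟩
  obtain ⟨⟨hx₀a, har⟩, hva⟩ : sInf S ∈ S := hS.csInf_mem hSne hSbdd
  set a := sInf S
  have hpos : ∀ x ∈ Ico x₀ a, 0 < v x := fun x hx => not_le.1 fun hvx =>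
    hx.2.not_ge (csInf_le hSbdd ⟨⟨hx.1, hx.2.le.trans har⟩, hvx⟩)
  have hx₀a : x₀ < a := hx₀a.lt_of_ne fun h => (h ▸ hva : v x₀ ≤ 0).not_gt h₀
  refine ⟨a, ⟨hx₀a, har⟩, le_antisymm hva ?_, hpos⟩
  have hcl : closure (Ico x₀ a) = Icc x₀ a := closure_Ico hx₀a.ne
  exact le_on_closure (fun x hx => (hpos x hx).le) continuousOn_const
    (hcl ▸ hv.mono (Icc_subset_Icc_right har)) (hcl ▸ right_mem_Icc.2 hx₀a.le)

lemma exists_last_zero_of_pos {v : ℝ → ℝ} {l x₀ : ℝ} (hv : ContinuousOn v (Icc l x₀))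
    (hlx₀ : l ≤ x₀) (h₀ : 0 < v x₀) (hl : v l ≤ 0) :
    ∃ b ∈ Ico l x₀, v b = 0 ∧ ∀ x ∈ Ioc b x₀, 0 < v x := by
  have hv' : ContinuousOn (fun x => v (-x)) (Icc (-x₀) (-l)) :=
    hv.comp continuousOn_neg fun x hx => ⟨by linarith [hx.2], by linarith [hx.1]⟩
  obtain ⟨a, ⟨hx₀a, hal⟩, hva, hpos⟩ :=
    exists_first_zero_of_pos hv' (neg_le_neg hlx₀) (by simpa using h₀) (by simpa using hl)
  refine ⟨-a, ⟨by linarith, by linarith⟩, hva, fun x hx => ?_⟩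
  simpa using hpos (-x) ⟨by linarith [hx.2], by linarith [hx.1]⟩

lemma exists_nodal_interval {v : ℝ → ℝ} {l r x₀ : ℝ} (hv : ContinuousOn v (Icc l r))
    (hl : v l ≤ 0) (hr : v r ≤ 0) (hx₀ : x₀ ∈ Icc l r) (h₀ : 0 < v x₀) :
    ∃ b a, l ≤ b ∧ b < a ∧ a ≤ r ∧ v b = 0 ∧ v a = 0 ∧ ∀ x ∈ Ioo b a, 0 < v x := by
  obtain ⟨b, ⟨hlb, hbx₀⟩, hvb, hposL⟩ :=
    exists_last_zero_of_pos (hv.mono (Icc_subset_Icc_right hx₀.2)) hx₀.1 h₀ hl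
  obtain ⟨a, ⟨hx₀a, har⟩, hva, hposR⟩ :=
    exists_first_zero_of_pos (hv.mono (Icc_subset_Icc_left hx₀.1)) hx₀.2 h₀ hr
  refine ⟨b, a, hlb, hbx₀.trans hx₀a, har, hvb, hva, fun x hx => ?_⟩
  rcases le_or_gt x x₀ with hx' | hx'
  · exact hposL x ⟨hx.1, hx'⟩
  · exact hposR x ⟨hx'.le, hx.2⟩

noncomputable def sinWronskian (v v' : ℝ → ℝ) (x : ℝ) : ℝ :=
  v' x * sin (π * x) - v x * (π * cos (π * x))

lemma hasDerivAt_sinWronskian {v v' : ℝ → ℝ} {q x : ℝ} (hv : HasDerivAt v (v' x) x)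
    (hv' : HasDerivAt v' (q * v x) x) :
    HasDerivAt (sinWronskian v v') ((q + π ^ 2) * v x * sin (π * x)) x := by
  have hlin : HasDerivAt (fun y => π * y) π x := by simpa using (hasDerivAt_id x).const_mul π
  have h := (hv'.mul hlin.sin).sub (hv.mul (hlin.cos.const_mul π))
  exact h.congr_deriv (by ring)

lemma sturm_comparison_sin {w v v' : ℝ → ℝ} {b a : ℝ} (hb : 0 ≤ b) (hba : b < a) (ha : a ≤ 1)
    (hw : ∀ x ∈ Ioo b a, -π ^ 2 < w x)
    (hv : ∀ x ∈ Icc b a, HasDerivAt v (v' x) x)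
    (hv' : ∀ x ∈ Icc b a, HasDerivAt v' (w x * v x) x)
    (hvb : v b = 0) (hva : v a = 0) : ¬ ∀ x ∈ Ioo b a, 0 < v x := by
  intro hpos
  have hsin_pos : ∀ x ∈ Ioo b a, 0 < sin (π * x) := fun x hx =>
    sin_pos_of_pos_of_lt_pi (by nlinarith [pi_pos, hx.1]) (by nlinarith [pi_pos, hx.2])
  have hsin_nonneg : ∀ x ∈ Icc b a, 0 ≤ sin (π * x) := fun x hx =>
    sin_nonneg_of_nonneg_of_le_pi (by nlinarith [pi_pos, hx.1]) (by nlinarith [pi_pos, hx.2])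
  have hmono : StrictMonoOn (sinWronskian v v') (Icc b a) := by
    refine strictMonoOn_of_hasDerivWithinAt_pos (f' := fun x => (w x + π ^ 2) * v x * sin (π * x))
      (convex_Icc b a)
      (fun x hx => (hasDerivAt_sinWronskian (hv x hx) (hv' x hx)).continuousAt.continuousWithinAt)
      (fun x hx => ?_) (fun x hx => ?_)
    all_goals rw [interior_Icc] at hx
    · exact (hasDerivAt_sinWronskian (hv x (Ioo_subset_Icc_self hx))
        (hv' x (Ioo_subset_Icc_self hx))).hasDerivWithinAt
    · exact mul_pos (mul_pos (by linarith [hw x hx]) (hpos x hx)) (hsin_pos x hx)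
  have hvmin : ∀ c ∈ Icc b a, v c = 0 → IsMinOn v (Icc b a) c := fun c _ hc x hx => by
    rcases hx.1.eq_or_lt with rfl | hbx
    · simp [hvb, hc]
    rcases hx.2.eq_or_lt with rfl | hxa
    · simp [hva, hc]
    simpa [hc] using (hpos x ⟨hbx, hxa⟩).le
  have hb_mem : b ∈ Icc b a := left_mem_Icc.2 hba.le
  have ha_mem : a ∈ Icc b a := right_mem_Icc.2 hba.le
  have hWb : 0 ≤ sinWronskian v v' b := by
    have := (hvmin b hb_mem hvb).hasDerivAt_nonneg_of_left hba (hv b hb_mem)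
    simp only [sinWronskian, hvb, zero_mul, sub_zero]
    exact mul_nonneg this (hsin_nonneg b hb_mem)
  have hWa : sinWronskian v v' a ≤ 0 := by
    have := (hvmin a ha_mem hva).hasDerivAt_nonpos_of_right hba (hv a ha_mem)
    simp only [sinWronskian, hva, zero_mul, sub_zero]
    exact mul_nonpos_of_nonpos_of_nonneg this (hsin_nonneg a ha_mem)
  exact (hmono hb_mem ha_mem hba).not_ge (hWa.trans hWb)

lemma nonpos_of_dirichlet {w v v' : ℝ → ℝ} (hw : ∀ x ∈ Icc (0 : ℝ) 1, -π ^ 2 < w x)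
    (hv : ∀ x ∈ Icc (0 : ℝ) 1, HasDerivAt v (v' x) x)
    (hv' : ∀ x ∈ Icc (0 : ℝ) 1, HasDerivAt v' (w x * v x) x)
    (hv0 : v 0 = 0) (hv1 : v 1 = 0) : ∀ x ∈ Icc (0 : ℝ) 1, v x ≤ 0 := by
  intro x₀ hx₀
  by_contra! h₀
  obtain ⟨b, a, hb, hba, ha, hvb, hva, hpos⟩ :=
    exists_nodal_interval (fun x hx => (hv x hx).continuousAt.continuousWithinAt)
      hv0.le hv1.le hx₀ h₀
  have hsub : Icc b a ⊆ Icc 0 1 := Icc_subset_Icc hb ha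
  exact sturm_comparison_sin hb hba ha (fun x hx => hw x (hsub (Ioo_subset_Icc_self hx)))
    (fun x hx => hv x (hsub hx)) (fun x hx => hv' x (hsub hx)) hvb hva hpos

lemma eq_zero_of_dirichlet {w v v' : ℝ → ℝ} (hw : ∀ x ∈ Icc (0 : ℝ) 1, -π ^ 2 < w x)
    (hv : ∀ x ∈ Icc (0 : ℝ) 1, HasDerivAt v (v' x) x)
    (hv' : ∀ x ∈ Icc (0 : ℝ) 1, HasDerivAt v' (w x * v x) x)
    (hv0 : v 0 = 0) (hv1 : v 1 = 0) : ∀ x ∈ Icc (0 : ℝ) 1, v x = 0 := by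
  have hneg := nonpos_of_dirichlet (v := -v) (v' := -v') hw (fun x hx => (hv x hx).neg)
    (fun x hx => by simpa using (hv' x hx).neg) (by simp [hv0]) (by simp [hv1])
  exact fun x hx => le_antisymm (nonpos_of_dirichlet hw hv hv' hv0 hv1 x hx)
    (by simpa using hneg x hx)

theorem uniqueness_classical_solution_general
    (wl : ℝ) (hwl : -π ^ 2 < wl)
    (w f : ℝ → ℝ)
    (hwb : ∀ x ∈ Set.Icc (0:ℝ) 1, wl ≤ w x)
    (u₁ u₁' u₁'' u₂ u₂' u₂'' : ℝ → ℝ)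
    (hu₁ : ∀ x ∈ Set.Icc (0:ℝ) 1, HasDerivAt u₁ (u₁' x) x)
    (hu₁' : ∀ x ∈ Set.Icc (0:ℝ) 1, HasDerivAt u₁' (u₁'' x) x)
    (hu₂ : ∀ x ∈ Set.Icc (0:ℝ) 1, HasDerivAt u₂ (u₂' x) x)
    (hu₂' : ∀ x ∈ Set.Icc (0:ℝ) 1, HasDerivAt u₂' (u₂'' x) x)
    (hu₁0 : u₁ 0 = 0) (hu₁1 : u₁ 1 = 0) (hu₂0 : u₂ 0 = 0) (hu₂1 : u₂ 1 = 0)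
    (hpde₁ : ∀ x ∈ Set.Icc (0:ℝ) 1, -u₁'' x + w x * u₁ x = f x)
    (hpde₂ : ∀ x ∈ Set.Icc (0:ℝ) 1, -u₂'' x + w x * u₂ x = f x) :
    ∀ x ∈ Set.Icc (0:ℝ) 1, u₁ x = u₂ x := by
  have hdiff : ∀ x ∈ Icc (0 : ℝ) 1, HasDerivAt (u₁' - u₂') (w x * (u₁ - u₂) x) x := fun x hx =>
    ((hu₁' x hx).sub (hu₂' x hx)).congr_deriv <| by
      simp only [Pi.sub_apply]; linarith [hpde₁ x hx, hpde₂ x hx]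
  have hzero := eq_zero_of_dirichlet (fun x hx => hwl.trans_le (hwb x hx))
    (fun x hx => (hu₁ x hx).sub (hu₂ x hx)) hdiff (by simp [hu₁0, hu₂0]) (by simp [hu₁1, hu₂1])
  exact fun x hx => sub_eq_zero.1 (hzero x hx)

theorem uniqueness_classical_solution
    (wl : ℝ) (hwl : -π ^ 2 < wl)
    (w f : ℝ → ℝ)
    (hwc : ContinuousOn w (Set.Icc 0 1)) (hfc : ContinuousOn f (Set.Icc 0 1))
    (hwb : ∀ x ∈ Set.Icc (0:ℝ) 1, wl ≤ w x)
    (u₁ u₁' u₁'' u₂ u₂' u₂'' : ℝ → ℝ)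
    (hu₁ : ∀ x ∈ Set.Icc (0:ℝ) 1, HasDerivAt u₁ (u₁' x) x)
    (hu₁' : ∀ x ∈ Set.Icc (0:ℝ) 1, HasDerivAt u₁' (u₁'' x) x)
    (hu₁''c : ContinuousOn u₁'' (Set.Icc 0 1))
    (hu₂ : ∀ x ∈ Set.Icc (0:ℝ) 1, HasDerivAt u₂ (u₂' x) x)
    (hu₂' : ∀ x ∈ Set.Icc (0:ℝ) 1, HasDerivAt u₂' (u₂'' x) x)
    (hu₂''c : ContinuousOn u₂'' (Set.Icc 0 1))
    (hu₁0 : u₁ 0 = 0) (hu₁1 : u₁ 1 = 0) (hu₂0 : u₂ 0 = 0) (hu₂1 : u₂ 1 = 0)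
    (hpde₁ : ∀ x ∈ Set.Icc (0:ℝ) 1, -u₁'' x + w x * u₁ x = f x)
    (hpde₂ : ∀ x ∈ Set.Icc (0:ℝ) 1, -u₂'' x + w x * u₂ x = f x) :
    ∀ x ∈ Set.Icc (0:ℝ) 1, u₁ x = u₂ x :=
  uniqueness_classical_solution_general wl hwl w f hwb u₁ u₁' u₁'' u₂ u₂' u₂'' hu₁ hu₁' hu₂ hu₂'
    hu₁0 hu₁1 hu₂0 hu₂1 hpde₁ hpde₂
end

section
/- Let u : ℝ → ℝ be continuously differentiable on [0,1] with u(0) = u(1) = 0, and let g : (0,1) → ℝ be integrable such that u′(x) = u′(0) − ∫_0^x g(t) dt for all x ∈ [0,1]. Then sup_{x ∈ [0,1]} |u′(x)| ≤ ∫_0^1 |g(t)| dt. -/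
open MeasureTheory

set_option maxHeartbeats 1000000

theorem deriv_sup_bound_by_L1_of_rhs
    (u u' : ℝ → ℝ)
    (hu : ∀ x ∈ Set.Icc (0:ℝ) 1, HasDerivAt u (u' x) x)
    (hu'c : ContinuousOn u' (Set.Icc 0 1))
    (hu0 : u 0 = 0) (hu1 : u 1 = 0)
    (g : ℝ → ℝ) (hgi : IntegrableOn g (Set.Ioo 0 1))
    (hrep : ∀ x ∈ Set.Icc (0:ℝ) 1, u' x = u' 0 - ∫ t in (0:ℝ)..x, g t) :
    ∀ x ∈ Set.Icc (0:ℝ) 1, |u' x| ≤ ∫ t in (0:ℝ)..1, |g t| := by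
  intro x hx
  -- Rolle: there is c ∈ (0,1) with u' c = 0
  obtain ⟨c, hc, hc0⟩ := exists_hasDerivAt_eq_zero (f := u) (f' := u')
    (by norm_num : (0:ℝ) < 1) (fun y hy => (hu y hy).continuousAt.continuousWithinAt)
    (hu1 ▸ hu0) (fun y hy => hu y (Set.Ioo_subset_Icc_self hy))
  have hcI : c ∈ Set.Icc (0:ℝ) 1 := Set.Ioo_subset_Icc_self hc
  have hgi' : IntegrableOn g (Set.Ioc 0 1) :=
    hgi.congr_set_ae Ioo_ae_eq_Ioc.symm
  have hint : ∀ a b : ℝ, a ∈ Set.Icc (0:ℝ) 1 → b ∈ Set.Icc (0:ℝ) 1 →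
      IntervalIntegrable g volume a b := by
    intro a b ha hb
    rw [intervalIntegrable_iff]
    exact hgi'.mono_set (Set.Ioc_subset_Ioc (le_min ha.1 hb.1) (max_le ha.2 hb.2))
  -- u' x = -∫ c..x g
  have key : u' x = -∫ t in c..x, g t := by
    rw [hrep x hx]
    have h2 := hrep c hcI
    rw [hc0] at h2
    have h3 : u' 0 = ∫ t in (0:ℝ)..c, g t := by linarith
    rw [h3, ← intervalIntegral.integral_add_adjacent_intervals
      (hint 0 c (Set.left_mem_Icc.mpr zero_le_one) hcI) (hint c x hcI hx)]
    ring
  rw [key, abs_neg]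
  calc |∫ t in c..x, g t| ≤ |(∫ t in c..x, |g t|)| := by
        simpa only [Real.norm_eq_abs] using
          intervalIntegral.norm_integral_le_abs_integral_norm (f := g) (a := c) (b := x)
    _ ≤ |(∫ t in (0:ℝ)..1, |g t|)| :=
        intervalIntegral.abs_integral_mono_interval (by
          apply Set.uIoc_subset_uIoc_of_uIcc_subset_uIcc
          rw [Set.uIcc_of_le (zero_le_one)]
          exact Set.uIcc_subset_Icc hcI hx)
          (Filter.Eventually.of_forall fun t => abs_nonneg _)
          (hint 0 1 (Set.left_mem_Icc.mpr zero_le_one) (Set.right_mem_Icc.mpr zero_le_one)).norm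
    _ = ∫ t in (0:ℝ)..1, |g t| :=
        abs_of_nonneg (intervalIntegral.integral_nonneg zero_le_one fun t _ => abs_nonneg _)
end

section
/- Fix a partition 0 = t_0 < t_1 < ⋯ < t_N = 1 of [0,1]; for an integrable function g on (0,1) let m_j(g) = (t_j − t_{j−1})^{−1} ∫_{t_{j−1}}^{t_j} g denote its mean over the j-th subinterval. Let f : [0,1] → ℝ be continuous, let M be a constant with 0 ≤ M < π², set c₂ = 1 − M/π², and let w : (0,1) → ℝ be measurable with |w(x)| ≤ M for almost every x. Let u : ℝ → ℝ be continuously differentiable on [0,1] with u(0) = u(1) = 0 such that on each open subinterval (t_{j−1}, t_j) the function u is twice differentiable and satisfies −u″(x) + m_j(w) · m_j(u) = f(x). Then (∫_0^1 u′(x)² dx)^{1/2} ≤ ‖f‖_{L²(0,1)} / c₂ and sup_{x ∈ [0,1]} |u(x)| ≤ ‖f‖_{L²(0,1)} / (2 c₂). -/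
open MeasureTheory Real

/-!
Testing the equation on each cell against `u` and summing over the cells, the boundary terms
`u' u` telescope to `0`. By Cauchy–Schwarz on a cell of length `L`, the averaged term
`m(w) m(u) ∫ u = m(w) (∫ u)² / L` is at least `-M ∫ u²`, so `‖u'‖² ≤ ‖f‖ ‖u‖ + M ‖u‖²`.
Wirtinger's inequality `π ‖u‖ ≤ ‖u'‖` then gives `(1 - M / π²) ‖u'‖ ≤ ‖f‖`; it comes from the
identity `(φ u²)' = u'² - k² u² - (u' - φ u)²` for a solution `φ = k cot (k x + c)` of
`φ' = -k² - φ²` that is regular on `[0, 1]`, which exists for every `k < π`.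
The sup bound follows from `u(x)² ≤ x (1 - x) ‖u'‖²`.
-/

open intervalIntegral Set Filter Topology

section Interval

variable {a b : ℝ}

theorem sq_integral_mul_le_integral_sq_mul_integral_sq (hab : a ≤ b) {f g : ℝ → ℝ}
    (hf : ContinuousOn f (Icc a b)) (hg : ContinuousOn g (Icc a b)) :
    (∫ x in a..b, f x * g x) ^ 2 ≤ (∫ x in a..b, f x ^ 2) * ∫ x in a..b, g x ^ 2 := by
  have hf2 : IntervalIntegrable (fun x => f x ^ 2) volume a b :=
    (hf.pow 2).intervalIntegrable_of_Icc hab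
  have hfg : IntervalIntegrable (fun x => f x * g x) volume a b :=
    (hf.mul hg).intervalIntegrable_of_Icc hab
  have hg2 : IntervalIntegrable (fun x => g x ^ 2) volume a b :=
    (hg.pow 2).intervalIntegrable_of_Icc hab
  have hquad : ∀ s : ℝ, 0 ≤ (∫ x in a..b, f x ^ 2) * (s * s)
      + (2 * ∫ x in a..b, f x * g x) * s + ∫ x in a..b, g x ^ 2 := fun s => by
    have hexpand : ∀ x, (s * f x + g x) ^ 2
        = (s * s) * f x ^ 2 + (2 * s) * (f x * g x) + g x ^ 2 := fun x => by ring
    have hnonneg : 0 ≤ ∫ x in a..b, (s * f x + g x) ^ 2 :=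
      integral_nonneg hab fun _ _ => sq_nonneg _
    simp_rw [hexpand] at hnonneg
    rw [integral_add ((hf2.const_mul _).add (hfg.const_mul _)) hg2,
      integral_add (hf2.const_mul _) (hfg.const_mul _), intervalIntegral.integral_const_mul,
      intervalIntegral.integral_const_mul] at hnonneg
    linarith
  have hdiscrim := discrim_le_zero hquad
  rw [discrim] at hdiscrim
  linarith

theorem sq_integral_le_mul_integral_sq (hab : a ≤ b) {f : ℝ → ℝ}
    (hf : ContinuousOn f (Icc a b)) :
    (∫ x in a..b, f x) ^ 2 ≤ (b - a) * ∫ x in a..b, f x ^ 2 := by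
  simpa [mul_comm] using
    sq_integral_mul_le_integral_sq_mul_integral_sq hab hf (continuousOn_const (c := 1))

variable {u u' : ℝ → ℝ}

theorem integral_eq_sub_of_hasDerivAt_Icc (hu : ∀ x ∈ Icc a b, HasDerivAt u (u' x) x)
    (hu' : ContinuousOn u' (Icc a b)) {x y : ℝ} (hx : x ∈ Icc a b) (hy : y ∈ Icc a b) :
    ∫ z in x..y, u' z = u y - u x :=
  integral_eq_sub_of_hasDerivAt (fun z hz => hu z (uIcc_subset_Icc hx hy hz))
    (hu'.mono (uIcc_subset_Icc hx hy)).intervalIntegrable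

theorem four_mul_sq_le_mul_integral_sq_deriv (hu : ∀ x ∈ Icc a b, HasDerivAt u (u' x) x)
    (hu' : ContinuousOn u' (Icc a b)) (ha : u a = 0) (hb : u b = 0) {x : ℝ}
    (hx : x ∈ Icc a b) :
    4 * u x ^ 2 ≤ (b - a) * ∫ y in a..b, u' y ^ 2 := by
  obtain ⟨hax, hxb⟩ := hx
  have hab := hax.trans hxb
  rcases hab.eq_or_lt with rfl | hlt
  · simp [le_antisymm hxb hax ▸ ha]
  have hleft : u x ^ 2 ≤ (x - a) * ∫ y in a..x, u' y ^ 2 := by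
    have := sq_integral_le_mul_integral_sq hax (hu'.mono (Icc_subset_Icc_right hxb))
    rwa [integral_eq_sub_of_hasDerivAt_Icc hu hu' ⟨le_rfl, hab⟩ ⟨hax, hxb⟩, ha, sub_zero] at this
  have hright : u x ^ 2 ≤ (b - x) * ∫ y in x..b, u' y ^ 2 := by
    have := sq_integral_le_mul_integral_sq hxb (hu'.mono (Icc_subset_Icc_left hax))
    rwa [integral_eq_sub_of_hasDerivAt_Icc hu hu' ⟨hax, hxb⟩ ⟨hab, le_rfl⟩, hb, zero_sub,
      neg_sq] at this
  have hsplit := integral_add_adjacent_intervals (f := fun y => u' y ^ 2)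
    (((hu'.pow 2).mono (Icc_subset_Icc_right hxb)).intervalIntegrable_of_Icc (μ := volume) hax)
    (((hu'.pow 2).mono (Icc_subset_Icc_left hax)).intervalIntegrable_of_Icc (μ := volume) hxb)
  -- `(b - a) u² = (b - x) u² + (x - a) u²`, and `(x - a) (b - x) ≤ (b - a)² / 4`.
  have hprod : (b - a) * u x ^ 2 ≤ (x - a) * (b - x) * ∫ y in a..b, u' y ^ 2 := by
    rw [← hsplit]
    nlinarith [mul_le_mul_of_nonneg_left hleft (sub_nonneg.2 hxb),
      mul_le_mul_of_nonneg_left hright (sub_nonneg.2 hax)]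
  have hE : 0 ≤ ∫ y in a..b, u' y ^ 2 := integral_nonneg hab fun _ _ => sq_nonneg _
  refine le_of_mul_le_mul_left ?_ (sub_pos.2 hlt)
  nlinarith [mul_nonneg hE (sq_nonneg (x - a - (b - x)))]

theorem mul_integral_sq_le_integral_sq_deriv_of_riccati (hab : a ≤ b) {k : ℝ} {φ : ℝ → ℝ}
    (hφ : ∀ x ∈ Icc a b, HasDerivAt φ (-k ^ 2 - φ x ^ 2) x)
    (hu : ∀ x ∈ Icc a b, HasDerivAt u (u' x) x) (hu' : ContinuousOn u' (Icc a b))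
    (ha : u a = 0) (hb : u b = 0) :
    k ^ 2 * ∫ x in a..b, u x ^ 2 ≤ ∫ x in a..b, u' x ^ 2 := by
  have huc : ContinuousOn u (Icc a b) := fun x hx => (hu x hx).continuousAt.continuousWithinAt
  have hφc : ContinuousOn φ (Icc a b) := fun x hx => (hφ x hx).continuousAt.continuousWithinAt
  have hderiv : ∀ x ∈ uIcc a b, HasDerivAt (fun y => φ y * u y ^ 2)
      ((u' x ^ 2 - k ^ 2 * u x ^ 2) - (u' x - φ x * u x) ^ 2) x := by
    intro x hx
    rw [uIcc_of_le hab] at hx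
    exact ((hφ x hx).mul ((hu x hx).pow 2)).congr_deriv (by simp only [Pi.pow_apply]; ring)
  have hu'2 : IntervalIntegrable (fun x => u' x ^ 2) volume a b :=
    (hu'.pow 2).intervalIntegrable_of_Icc hab
  have hku2 : IntervalIntegrable (fun x => k ^ 2 * u x ^ 2) volume a b :=
    (continuousOn_const.mul (huc.pow 2)).intervalIntegrable_of_Icc hab
  have hsq : IntervalIntegrable (fun x => (u' x - φ x * u x) ^ 2) volume a b :=
    ((hu'.sub (hφc.mul huc)).pow 2).intervalIntegrable_of_Icc hab
  have hftc := integral_eq_sub_of_hasDerivAt hderiv ((hu'2.sub hku2).sub hsq)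
  rw [integral_sub (hu'2.sub hku2) hsq, integral_sub hu'2 hku2,
    intervalIntegral.integral_const_mul, ha, hb, zero_pow two_ne_zero, mul_zero, mul_zero,
    sub_zero] at hftc
  have hsq0 : 0 ≤ ∫ x in a..b, (u' x - φ x * u x) ^ 2 := integral_nonneg hab fun _ _ => sq_nonneg _
  linarith

theorem hasDerivAt_mul_cos_div_sin (k c : ℝ) {x : ℝ} (hx : sin (k * x + c) ≠ 0) :
    HasDerivAt (fun y => k * cos (k * y + c) / sin (k * y + c))
      (-k ^ 2 - (k * cos (k * x + c) / sin (k * x + c)) ^ 2) x := by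
  have hlin : HasDerivAt (fun y => k * y + c) k x := by
    simpa using ((hasDerivAt_id x).const_mul k).add_const c
  refine ((hlin.cos.const_mul k).div hlin.sin hx).congr_deriv ?_
  field_simp

theorem mul_integral_sq_le_integral_sq_deriv (hab : a < b)
    (hu : ∀ x ∈ Icc a b, HasDerivAt u (u' x) x) (hu' : ContinuousOn u' (Icc a b))
    (ha : u a = 0) (hb : u b = 0) :
    (π / (b - a)) ^ 2 * ∫ x in a..b, u x ^ 2 ≤ ∫ x in a..b, u' x ^ 2 := by
  have hba : 0 < b - a := sub_pos.2 hab
  have hlt : ∀ k ∈ Ioo 0 (π / (b - a)),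
      k ^ 2 * ∫ x in a..b, u x ^ 2 ≤ ∫ x in a..b, u' x ^ 2 := by
    rintro k ⟨hk0, hkπ⟩
    have hkba : k * (b - a) < π := (lt_div_iff₀ hba).1 hkπ
    -- the phase `c` puts `k x + c` in `(0, π)` for `x ∈ [a, b]`, so `k cot (k x + c)` is regular
    obtain ⟨c, hc⟩ : ∃ c, c = (π - k * (b - a)) / 2 - k * a := ⟨_, rfl⟩
    refine mul_integral_sq_le_integral_sq_deriv_of_riccati hab.le (fun x hx =>
      hasDerivAt_mul_cos_div_sin k c (sin_pos_of_pos_of_lt_pi ?_ ?_).ne') hu hu' ha hb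
    · nlinarith [hx.1]
    · nlinarith [hx.2]
  refine le_of_tendsto (f := fun k => k ^ 2 * ∫ x in a..b, u x ^ 2)
    (x := 𝓝[<] (π / (b - a))) ?_ ?_
  · exact ((continuous_pow 2).mul continuous_const).continuousWithinAt.tendsto
  · filter_upwards [Ioo_mem_nhdsLT (div_pos pi_pos hba)] using hlt

theorem integral_sq_deriv_add_const_mul_integral_sub_integral_mul (hab : a ≤ b)
    {u'' f : ℝ → ℝ} {c : ℝ} (hu : ∀ x ∈ Icc a b, HasDerivAt u (u' x) x)
    (hu' : ContinuousOn u' (Icc a b)) (hf : ContinuousOn f (Icc a b))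
    (hode : ∀ x ∈ Ioo a b, HasDerivAt u' (u'' x) x ∧ -u'' x + c = f x) :
    (∫ x in a..b, u' x ^ 2) + c * (∫ x in a..b, u x) - ∫ x in a..b, f x * u x
      = u' b * u b - u' a * u a := by
  have huc : ContinuousOn u (Icc a b) := fun x hx => (hu x hx).continuousAt.continuousWithinAt
  have hderiv : ∀ x ∈ Ioo a b,
      HasDerivAt (fun y => u' y * u y) (u' x ^ 2 + c * u x - f x * u x) x := by
    intro x hx
    obtain ⟨hu'', hode⟩ := hode x hx
    exact (hu''.mul (hu x (Ioo_subset_Icc_self hx))).congr_deriv (by rw [← hode]; ring)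
  have hu'2 : IntervalIntegrable (fun x => u' x ^ 2) volume a b :=
    (hu'.pow 2).intervalIntegrable_of_Icc hab
  have hcu : IntervalIntegrable (fun x => c * u x) volume a b :=
    (continuousOn_const.mul huc).intervalIntegrable_of_Icc hab
  have hfu : IntervalIntegrable (fun x => f x * u x) volume a b :=
    (hf.mul huc).intervalIntegrable_of_Icc hab
  rw [← intervalIntegral.integral_const_mul, ← integral_add hu'2 hcu,
    ← integral_sub (hu'2.add hcu) hfu]
  exact integral_eq_sub_of_hasDerivAt_of_le hab (hu'.mul huc) hderiv ((hu'2.add hcu).sub hfu)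

theorem neg_mul_integral_sq_le_mul_mean_mul_integral (hab : a < b) {m M : ℝ} (hm : |m| ≤ M)
    (hu : ContinuousOn u (Icc a b)) :
    -(M * ∫ x in a..b, u x ^ 2) ≤ m * ((b - a)⁻¹ * ∫ x in a..b, u x) * ∫ x in a..b, u x := by
  have hq : (b - a)⁻¹ * (∫ x in a..b, u x) ^ 2 ≤ ∫ x in a..b, u x ^ 2 :=
    (inv_mul_le_iff₀ (sub_pos.2 hab)).2 (sq_integral_le_mul_integral_sq hab.le hu)
  have hq0 : 0 ≤ (b - a)⁻¹ * (∫ x in a..b, u x) ^ 2 := by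
    have := sub_pos.2 hab
    positivity
  calc -(M * ∫ x in a..b, u x ^ 2) ≤ -M * ((b - a)⁻¹ * (∫ x in a..b, u x) ^ 2) := by
        nlinarith [(abs_nonneg m).trans hm]
    _ ≤ m * ((b - a)⁻¹ * (∫ x in a..b, u x) ^ 2) :=
        mul_le_mul_of_nonneg_right (neg_le_of_abs_le hm) hq0
    _ = _ := by ring

end Interval

section Partition

variable {N : ℕ} {t : ℕ → ℝ}

theorem cellMean_succ_s14 (t : ℕ → ℝ) (i : ℕ) (g : ℝ → ℝ) :
    cellMean t (i + 1) g = (t (i + 1) - t i)⁻¹ * ∫ x in t i..t (i + 1), g x :=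
  rfl

theorem abs_cellMean_succ_le {i : ℕ} (hi : t i < t (i + 1)) {w : ℝ → ℝ} {M : ℝ}
    (hw : ∀ᵐ x ∂volume.restrict (Ioo (t i) (t (i + 1))), |w x| ≤ M) :
    |cellMean t (i + 1) w| ≤ M := by
  have hlen : 0 < t (i + 1) - t i := sub_pos.2 hi
  have hint := norm_setIntegral_le_of_norm_le_const_ae (f := w) (by simp) hw
  rw [Real.volume_real_Ioo_of_le hi.le, ← integral_Ioc_eq_integral_Ioo,
    ← intervalIntegral.integral_of_le hi.le, Real.norm_eq_abs] at hint
  rw [cellMean_succ_s14, abs_mul, abs_inv, abs_of_pos hlen, inv_mul_le_iff₀ hlen]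
  linarith

theorem Icc_subset_Icc_of_partition (hmono : ∀ i < N, t i < t (i + 1)) :
    ∀ i < N, Icc (t i) (t (i + 1)) ⊆ Icc (t 0) (t N) := by
  intro i hi
  have hmon := (strictMonoOn_Iic_of_lt_succ (ψ := t) (n := N) hmono).monotoneOn
  exact Icc_subset_Icc (hmon (by simp) (by simp; omega) (Nat.zero_le i))
    (hmon (by simp; omega) (by simp) hi)

theorem sum_integral_cells (hmono : ∀ i < N, t i < t (i + 1)) {g : ℝ → ℝ}
    (hg : ContinuousOn g (Icc (t 0) (t N))) :
    ∑ i ∈ Finset.range N, ∫ x in t i..t (i + 1), g x = ∫ x in t 0..t N, g x :=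
  sum_integral_adjacent_intervals fun i hi =>
    (hg.mono (Icc_subset_Icc_of_partition hmono i hi)).intervalIntegrable_of_Icc (hmono i hi).le

theorem integral_sq_deriv_le_of_averaged_ode (hmono : ∀ i < N, t i < t (i + 1))
    {u u' u'' f w : ℝ → ℝ} {M : ℝ} (hu : ∀ x ∈ Icc (t 0) (t N), HasDerivAt u (u' x) x)
    (hu' : ContinuousOn u' (Icc (t 0) (t N))) (hf : ContinuousOn f (Icc (t 0) (t N)))
    (h0 : u (t 0) = 0) (hN : u (t N) = 0) (hw : ∀ i < N, |cellMean t (i + 1) w| ≤ M)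
    (hode : ∀ i < N, ∀ x ∈ Ioo (t i) (t (i + 1)), HasDerivAt u' (u'' x) x ∧
      -u'' x + cellMean t (i + 1) w * cellMean t (i + 1) u = f x) :
    ∫ x in t 0..t N, u' x ^ 2 ≤ (∫ x in t 0..t N, f x * u x) + M * ∫ x in t 0..t N, u x ^ 2 := by
  have huc : ContinuousOn u (Icc (t 0) (t N)) := fun x hx =>
    (hu x hx).continuousAt.continuousWithinAt
  have hsub := Icc_subset_Icc_of_partition hmono
  have hcell : ∀ i ∈ Finset.range N, (∫ x in t i..t (i + 1), u' x ^ 2)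
      + cellMean t (i + 1) w * cellMean t (i + 1) u * (∫ x in t i..t (i + 1), u x)
      - ∫ x in t i..t (i + 1), f x * u x
      = u' (t (i + 1)) * u (t (i + 1)) - u' (t i) * u (t i) := fun i hi => by
    rw [Finset.mem_range] at hi
    exact integral_sq_deriv_add_const_mul_integral_sub_integral_mul (hmono i hi).le
      (fun x hx => hu x (hsub i hi hx)) (hu'.mono (hsub i hi)) (hf.mono (hsub i hi)) (hode i hi)
  have htel := Finset.sum_congr rfl hcell
  rw [Finset.sum_range_sub (fun i => u' (t i) * u (t i)), h0, hN, Finset.sum_sub_distrib,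
    Finset.sum_add_distrib, sum_integral_cells (g := fun x => u' x ^ 2) hmono (hu'.pow 2),
    sum_integral_cells (g := fun x => f x * u x) hmono (hf.mul huc)] at htel
  have hlow : -(M * ∫ x in t 0..t N, u x ^ 2) ≤ ∑ i ∈ Finset.range N,
      cellMean t (i + 1) w * cellMean t (i + 1) u * ∫ x in t i..t (i + 1), u x := by
    rw [← sum_integral_cells (g := fun x => u x ^ 2) hmono (huc.pow 2), Finset.mul_sum,
      ← Finset.sum_neg_distrib]
    refine Finset.sum_le_sum fun i hi => ?_
    rw [Finset.mem_range] at hi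
    exact neg_mul_integral_sq_le_mul_mean_mul_integral (hmono i hi) (hw i hi)
      (huc.mono (hsub i hi))
  linarith

end Partition

theorem sqrt_le_sqrt_div_one_sub_of_coercive {E U F I M k : ℝ} (hk : 1 ≤ k) (hM0 : 0 ≤ M)
    (hMk : M < k ^ 2) (hU : 0 ≤ U) (hkU : k ^ 2 * U ≤ E) (hE : E ≤ I + M * U)
    (hI : I ^ 2 ≤ F * U) :
    √E ≤ √F / (1 - M / k ^ 2) := by
  have hk2 : 0 < k ^ 2 := by positivity
  have hc : 0 < 1 - M / k ^ 2 := sub_pos.2 ((div_lt_one hk2).2 hMk)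
  have hE0 : 0 ≤ E := (mul_nonneg hk2.le hU).trans hkU
  have hcoer : (1 - M / k ^ 2) * E ≤ I := by
    have : M / k ^ 2 * (k ^ 2 * U) ≤ M / k ^ 2 * E := by gcongr
    rw [← mul_assoc, div_mul_cancel₀ M hk2.ne'] at this
    linarith
  have hsqrtU : k * √U ≤ √E := by
    rw [← sqrt_sq (zero_le_one.trans hk), ← sqrt_mul (sq_nonneg k)]
    exact sqrt_le_sqrt hkU
  have hIF : I ≤ √F * √E := calc
    I ≤ √F * √U := by rw [← sqrt_mul' F hU]; exact le_sqrt_of_sq_le hI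
    _ ≤ √F * (k * √U) := by gcongr; nlinarith [sqrt_nonneg U]
    _ ≤ √F * √E := by gcongr
  rw [le_div_iff₀ hc]
  rcases (sqrt_nonneg E).eq_or_lt with h0 | hpos
  · rw [← h0, zero_mul]; exact sqrt_nonneg F
  · refine le_of_mul_le_mul_left ?_ hpos
    nlinarith [sq_sqrt hE0]

theorem apriori_bounds_averaged_pde_general
    (N : ℕ) (t : ℕ → ℝ)
    (ht0 : t 0 = 0) (htN : t N = 1) (hmono : ∀ i < N, t i < t (i + 1))
    (f : ℝ → ℝ) (hfc : ContinuousOn f (Set.Icc 0 1))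
    (M : ℝ) (hM0 : 0 ≤ M) (hMpi : M < π ^ 2)
    (w : ℝ → ℝ)
    (hwb : ∀ᵐ x ∂(volume.restrict (Set.Ioo (0:ℝ) 1)), |w x| ≤ M)
    (u u' u'' : ℝ → ℝ)
    (hu : ∀ x ∈ Set.Icc (0:ℝ) 1, HasDerivAt u (u' x) x)
    (hu'c : ContinuousOn u' (Set.Icc 0 1))
    (hu0 : u 0 = 0) (hu1 : u 1 = 0)
    (hode : ∀ j ∈ Finset.Icc 1 N, ∀ x ∈ Set.Ioo (t (j - 1)) (t j),
      HasDerivAt u' (u'' x) x ∧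
      -u'' x + cellMean t j w * cellMean t j u = f x) :
    Real.sqrt (∫ x in (0:ℝ)..1, u' x ^ 2) ≤
      Real.sqrt (∫ x in (0:ℝ)..1, f x ^ 2) / (1 - M / π ^ 2) ∧
    ∀ x ∈ Set.Icc (0:ℝ) 1,
      |u x| ≤ Real.sqrt (∫ x in (0:ℝ)..1, f x ^ 2) / (2 * (1 - M / π ^ 2)) := by
  have huc : ContinuousOn u (Icc 0 1) := fun x hx => (hu x hx).continuousAt.continuousWithinAt
  have hsub := Icc_subset_Icc_of_partition hmono
  rw [ht0, htN] at hsub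
  have hw : ∀ i < N, |cellMean t (i + 1) w| ≤ M := fun i hi =>
    abs_cellMean_succ_le (hmono i hi) (ae_restrict_of_ae_restrict_of_subset
      (Ioo_subset_Ioo (hsub i hi (left_mem_Icc.2 (hmono i hi).le)).1
        (hsub i hi (right_mem_Icc.2 (hmono i hi).le)).2) hwb)
  have hE := integral_sq_deriv_le_of_averaged_ode hmono (by rwa [ht0, htN]) (by rwa [ht0, htN])
    (by rwa [ht0, htN]) (by rwa [ht0]) (by rwa [htN]) hw
    fun i hi => hode (i + 1) (Finset.mem_Icc.2 ⟨by omega, hi⟩)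
  rw [ht0, htN] at hE
  have hP := mul_integral_sq_le_integral_sq_deriv zero_lt_one hu hu'c hu0 hu1
  rw [sub_zero, div_one] at hP
  have hgrad := sqrt_le_sqrt_div_one_sub_of_coercive (by linarith [pi_gt_three]) hM0 hMpi
    (integral_nonneg zero_le_one fun _ _ => sq_nonneg _) hP hE
    (sq_integral_mul_le_integral_sq_mul_integral_sq zero_le_one hfc huc)
  refine ⟨hgrad, fun x hx => ?_⟩
  have hsup : 2 * |u x| ≤ √(∫ y in (0:ℝ)..1, u' y ^ 2) := by
    have h4 := four_mul_sq_le_mul_integral_sq_deriv hu hu'c hu0 hu1 hx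
    rw [sub_zero, one_mul] at h4
    refine le_sqrt_of_sq_le ?_
    rw [mul_pow, sq_abs]
    linarith
  rw [mul_comm 2, ← div_div, le_div_iff₀ two_pos]
  linarith

theorem apriori_bounds_averaged_pde
    (N : ℕ) (hN : 1 ≤ N) (t : ℕ → ℝ)
    (ht0 : t 0 = 0) (htN : t N = 1) (hmono : ∀ i < N, t i < t (i + 1))
    (f : ℝ → ℝ) (hfc : ContinuousOn f (Set.Icc 0 1))
    (M : ℝ) (hM0 : 0 ≤ M) (hMpi : M < π ^ 2)
    (w : ℝ → ℝ) (hwm : Measurable w)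
    (hwb : ∀ᵐ x ∂(volume.restrict (Set.Ioo (0:ℝ) 1)), |w x| ≤ M)
    (u u' u'' : ℝ → ℝ)
    (hu : ∀ x ∈ Set.Icc (0:ℝ) 1, HasDerivAt u (u' x) x)
    (hu'c : ContinuousOn u' (Set.Icc 0 1))
    (hu0 : u 0 = 0) (hu1 : u 1 = 0)
    (hode : ∀ j ∈ Finset.Icc 1 N, ∀ x ∈ Set.Ioo (t (j - 1)) (t j),
      HasDerivAt u' (u'' x) x ∧
      -u'' x + cellMean t j w * cellMean t j u = f x) :
    Real.sqrt (∫ x in (0:ℝ)..1, u' x ^ 2) ≤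
      Real.sqrt (∫ x in (0:ℝ)..1, f x ^ 2) / (1 - M / π ^ 2) ∧
    ∀ x ∈ Set.Icc (0:ℝ) 1,
      |u x| ≤ Real.sqrt (∫ x in (0:ℝ)..1, f x ^ 2) / (2 * (1 - M / π ^ 2)) :=
  apriori_bounds_averaged_pde_general N t ht0 htN hmono f hfc M hM0 hMpi w hwb u u' u'' hu hu'c hu0
    hu1 hode
end

section
/- Let w_ℓ, w_u be real constants with −π² < w_ℓ ≤ w_u, set c₁ = 1 + w_ℓ/π² and M = max(|w_ℓ|, |w_u|). Let w, g : [0,1] → ℝ be continuous with w_ℓ ≤ w(x) ≤ w_u for all x, and let p : ℝ → ℝ be twice continuously differentiable on [0,1] with p(0) = p(1) = 0 and −p″(x) + w(x) p(x) = g(x) for all x ∈ [0,1]. Then sup_{x ∈ [0,1]} |p′(x)| ≤ (1 + M/(π c₁)) · (∫_0^1 g(x)² dx)^{1/2}. -/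
/-!
Testing the equation against `p` and integrating by parts gives
`∫ p'² + wₗ ∫ p² ≤ ∫ g p`; Wirtinger's inequality `π² ∫ p² ≤ ∫ p'²` and Cauchy–Schwarz then give
`(π² + wₗ) ‖p‖₂ ≤ ‖g‖₂`. Since `p 0 = p 1`, Rolle's theorem provides a zero `ξ` of `p'`, so
`|p' x| ≤ ∫ |p''| ≤ ∫ |g| + M ∫ |p| ≤ ‖g‖₂ + M ‖p‖₂`.
Wirtinger's inequality comes from `p'² - π² p² = (p' - π cot (π x) p)² + (π cot (π x) p²)'`,
where `π cot (π x) p²` tends to `0` at both ends of `[0, 1]` because `p` vanishes there.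
-/

open MeasureTheory Real Set Filter Topology intervalIntegral
open scoped Interval

theorem sq_integral_mul_le_integral_sq_mul_integral_sq_s18 {α : Type*} [MeasurableSpace α]
    {μ : Measure α} {f g : α → ℝ} (hf : Integrable (fun x => f x ^ 2) μ)
    (hg : Integrable (fun x => g x ^ 2) μ) (hfg : Integrable (fun x => f x * g x) μ) :
    (∫ x, f x * g x ∂μ) ^ 2 ≤ (∫ x, f x ^ 2 ∂μ) * ∫ x, g x ^ 2 ∂μ := by
  have hquad : ∀ t : ℝ, 0 ≤ (∫ x, g x ^ 2 ∂μ) * (t * t) + 2 * (∫ x, f x * g x ∂μ) * t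
      + ∫ x, f x ^ 2 ∂μ := by
    intro t
    have hexpand : ∫ x, (t * g x + f x) ^ 2 ∂μ
        = (∫ x, g x ^ 2 ∂μ) * (t * t) + 2 * (∫ x, f x * g x ∂μ) * t + ∫ x, f x ^ 2 ∂μ := by
      have hpoint : (fun x => (t * g x + f x) ^ 2)
          = fun x => t * t * g x ^ 2 + 2 * t * (f x * g x) + f x ^ 2 := by
        ext x; ring
      rw [hpoint, integral_add (by exact (hg.const_mul _).add (hfg.const_mul _)) hf,
        integral_add (hg.const_mul _) (hfg.const_mul _), MeasureTheory.integral_const_mul,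
        MeasureTheory.integral_const_mul]
      ring
    exact hexpand ▸ integral_nonneg fun x => sq_nonneg _
  have := discrim_le_zero hquad
  rw [discrim] at this
  linarith

theorem integral_mul_le_sqrt_mul_sqrt {a b : ℝ} (hab : a ≤ b) {f g : ℝ → ℝ}
    (hf : ContinuousOn f (Icc a b)) (hg : ContinuousOn g (Icc a b)) :
    ∫ x in a..b, f x * g x ≤ √(∫ x in a..b, f x ^ 2) * √(∫ x in a..b, g x ^ 2) := by
  have hint {h : ℝ → ℝ} (hh : ContinuousOn h (Icc a b)) : IntegrableOn h (Ioc a b) :=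
    hh.integrableOn_Icc.mono_set Ioc_subset_Icc_self
  simp only [integral_of_le hab]
  rw [← sqrt_mul (setIntegral_nonneg measurableSet_Ioc fun x _ => sq_nonneg (f x))]
  exact (le_abs_self _).trans <| abs_le_sqrt <| sq_integral_mul_le_integral_sq_mul_integral_sq_s18
    (hint (hf.pow 2)) (hint (hg.pow 2)) (hint (hf.mul hg))

theorem integral_abs_le_sqrt_mul_sqrt {a b : ℝ} (hab : a ≤ b) {f : ℝ → ℝ}
    (hf : ContinuousOn f (Icc a b)) :
    ∫ x in a..b, |f x| ≤ √(b - a) * √(∫ x in a..b, f x ^ 2) := by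
  have := integral_mul_le_sqrt_mul_sqrt hab (continuousOn_const (c := 1)) hf.abs
  simpa using this

theorem tendsto_div_of_hasDerivAt_of_eq_zero {f g : ℝ → ℝ} {f' g' a : ℝ}
    (hf : HasDerivAt f f' a) (hg : HasDerivAt g g' a) (hfa : f a = 0) (hga : g a = 0)
    (hg' : g' ≠ 0) : Tendsto (fun x => f x / g x) (𝓝[≠] a) (𝓝 (f' / g')) := by
  refine ((hasDerivAt_iff_tendsto_slope.mp hf).div
    (hasDerivAt_iff_tendsto_slope.mp hg) hg').congr' ?_
  filter_upwards [self_mem_nhdsWithin] with x hx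
  simp only [Pi.div_apply, slope_def_field, hfa, hga, sub_zero]
  exact div_div_div_cancel_right₀ (sub_ne_zero.mpr hx) _ _

theorem continuousAt_sq_div_of_hasDerivAt_of_eq_zero {f g : ℝ → ℝ} {f' g' a : ℝ}
    (hf : HasDerivAt f f' a) (hg : HasDerivAt g g' a) (hfa : f a = 0) (hga : g a = 0)
    (hg' : g' ≠ 0) : ContinuousAt (fun x => f x ^ 2 / g x) a := by
  rw [← continuousWithinAt_compl_self, ContinuousWithinAt]
  have := (hf.continuousAt.tendsto.mono_left nhdsWithin_le_nhds).mul
    (tendsto_div_of_hasDerivAt_of_eq_zero hf hg hfa hga hg')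
  rw [hfa, zero_mul] at this
  rw [hfa, hga, div_zero]
  exact this.congr fun x => by ring

theorem abs_sub_le_integral_abs_deriv {f f' : ℝ → ℝ} {a b x y : ℝ}
    (hf : ∀ z ∈ Icc a b, HasDerivAt f (f' z) z) (hf' : ContinuousOn f' (Icc a b))
    (hx : x ∈ Icc a b) (hy : y ∈ Icc a b) : |f x - f y| ≤ ∫ z in a..b, |f' z| := by
  have hsub : uIcc y x ⊆ Icc a b := uIcc_subset_Icc hy hx
  rw [← integral_eq_sub_of_hasDerivAt (fun z hz => hf z (hsub hz))
    ((hf'.mono hsub).intervalIntegrable), integral_of_le (hx.1.trans hx.2)]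
  calc |∫ z in y..x, f' z| ≤ ∫ z in Ι y x, |f' z| :=
        norm_integral_le_integral_norm_uIoc (f := f')
    _ ≤ ∫ z in Ioc a b, |f' z| :=
      setIntegral_mono_set (hf'.abs.integrableOn_Icc.mono_set Ioc_subset_Icc_self)
        (Eventually.of_forall fun z => abs_nonneg _)
        (Ioc_subset_Ioc (le_min hy.1 hx.1) (max_le hy.2 hx.2)).eventuallyLE

theorem pi_sq_mul_integral_sq_le_integral_deriv_sq {p p' : ℝ → ℝ}
    (hp : ∀ x ∈ Icc (0 : ℝ) 1, HasDerivAt p (p' x) x) (hp' : ContinuousOn p' (Icc 0 1))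
    (h0 : p 0 = 0) (h1 : p 1 = 0) :
    π ^ 2 * ∫ x in (0 : ℝ)..1, p x ^ 2 ≤ ∫ x in (0 : ℝ)..1, p' x ^ 2 := by
  have hsin (x : ℝ) : HasDerivAt (fun y => sin (π * y)) (π * cos (π * x)) x := by
    simpa [mul_comm] using ((hasDerivAt_id x).const_mul π).sin
  have hcos (x : ℝ) : HasDerivAt (fun y => cos (π * y)) (-(π * sin (π * x))) x := by
    simpa [mul_comm] using ((hasDerivAt_id x).const_mul π).cos
  have hsin_ne {x : ℝ} (hx : x ∈ Ioo (0 : ℝ) 1) : sin (π * x) ≠ 0 :=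
    (sin_pos_of_pos_of_lt_pi (by nlinarith [hx.1, pi_pos]) (by nlinarith [hx.2, pi_pos])).ne'
  -- At `x = 0, 1` the quotient is `0 / 0 = 0`, which is also its limit there.
  set F : ℝ → ℝ := fun x => π * cos (π * x) * (p x ^ 2 / sin (π * x))
  have hFc : ContinuousOn F (Icc 0 1) := by
    refine fun x hx => ContinuousAt.continuousWithinAt ?_
    refine (continuous_const.mul (continuous_cos.comp (continuous_const_mul π))).continuousAt.mul ?_
    rcases eq_endpoints_or_mem_Ioo_of_mem_Icc hx with rfl | rfl | hx'
    · exact continuousAt_sq_div_of_hasDerivAt_of_eq_zero (hp 0 hx) (hsin 0) h0 (by simp)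
        (by simp [pi_ne_zero])
    · exact continuousAt_sq_div_of_hasDerivAt_of_eq_zero (hp 1 hx) (hsin 1) h1 (by simp)
        (by simp [pi_ne_zero])
    · exact ((hp x hx).continuousAt.pow 2).div (hsin x).continuousAt (hsin_ne hx')
  have hF (x : ℝ) (hx : x ∈ Ioo (0 : ℝ) 1) : HasDerivAt F
      (p' x ^ 2 - π ^ 2 * p x ^ 2 - (p' x - π * cos (π * x) / sin (π * x) * p x) ^ 2) x := by
    have hd := ((hcos x).const_mul π).mul (((hp x (Ioo_subset_Icc_self hx)).pow 2).div (hsin x)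
      (hsin_ne hx))
    refine hd.congr_deriv ?_
    have := hsin_ne hx
    simp only [Pi.pow_apply, Pi.div_apply]
    field_simp
    ring
  have hpc : ContinuousOn p (Icc 0 1) := fun x hx => (hp x hx).continuousAt.continuousWithinAt
  have hFTC := sub_le_integral_of_hasDeriv_right_of_le (φ := fun x => p' x ^ 2 - π ^ 2 * p x ^ 2)
    zero_le_one hFc (fun x hx => (hF x hx).hasDerivWithinAt)
    ((hp'.pow 2).sub (continuousOn_const.mul (hpc.pow 2))).integrableOn_Icc
    (fun x _ => sub_le_self _ (sq_nonneg _))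
  rw [intervalIntegral.integral_sub (by exact (hp'.pow 2).intervalIntegrable_of_Icc zero_le_one)
    (by exact (continuousOn_const.mul (hpc.pow 2)).intervalIntegrable_of_Icc zero_le_one),
    intervalIntegral.integral_const_mul] at hFTC
  have hF0 : F 0 = 0 := by simp [F, h0]
  have hF1 : F 1 = 0 := by simp [F, h1]
  rw [hF0, hF1, sub_self] at hFTC
  linarith

theorem integral_deriv_sq_add_mul_integral_sq_le {w g p p' p'' : ℝ → ℝ} {a b wl : ℝ}
    (hab : a ≤ b) (hwb : ∀ x ∈ Icc a b, wl ≤ w x) (hgc : ContinuousOn g (Icc a b))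
    (hp : ∀ x ∈ Icc a b, HasDerivAt p (p' x) x) (hp' : ∀ x ∈ Icc a b, HasDerivAt p' (p'' x) x)
    (hp''c : ContinuousOn p'' (Icc a b)) (hpa : p a = 0) (hpb : p b = 0)
    (hpde : ∀ x ∈ Icc a b, -p'' x + w x * p x = g x) :
    (∫ x in a..b, p' x ^ 2) + wl * ∫ x in a..b, p x ^ 2 ≤ ∫ x in a..b, g x * p x := by
  have hpc : ContinuousOn p (Icc a b) := fun x hx => (hp x hx).continuousAt.continuousWithinAt
  have hp'c : ContinuousOn p' (Icc a b) := fun x hx => (hp' x hx).continuousAt.continuousWithinAt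
  have hint {h : ℝ → ℝ} (hh : ContinuousOn h (Icc a b)) : IntervalIntegrable h volume a b :=
    hh.intervalIntegrable_of_Icc hab
  have hparts : ∫ x in a..b, p x * p'' x = -∫ x in a..b, p' x ^ 2 := by
    rw [integral_mul_deriv_eq_deriv_mul (fun x hx => hp x (uIcc_of_le hab ▸ hx))
      (fun x hx => hp' x (uIcc_of_le hab ▸ hx)) (hint hp'c) (hint hp''c), hpa, hpb]
    simp [sq]
  have hpointwise : ∀ x ∈ Icc a b, -(p x * p'' x) ≤ g x * p x - wl * p x ^ 2 := by
    intro x hx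
    have hp''x : p'' x = w x * p x - g x := by linarith [hpde x hx]
    rw [hp''x]
    nlinarith [mul_le_mul_of_nonneg_right (hwb x hx) (sq_nonneg (p x))]
  have hmono : ∫ x in a..b, -(p x * p'' x) ≤ ∫ x in a..b, (g x * p x - wl * p x ^ 2) :=
    integral_mono_on hab (hint (hpc.mul hp''c).neg)
    (hint ((hgc.mul hpc).sub (continuousOn_const.mul (hpc.pow 2)))) hpointwise
  rw [intervalIntegral.integral_neg, hparts, intervalIntegral.integral_sub
    (by exact hint (hgc.mul hpc)) (by exact hint (continuousOn_const.mul (hpc.pow 2))),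
    intervalIntegral.integral_const_mul] at hmono
  linarith

theorem mul_sqrt_integral_sq_le_sqrt_integral_sq {w g p p' p'' : ℝ → ℝ} {wl : ℝ}
    (hwb : ∀ x ∈ Icc (0 : ℝ) 1, wl ≤ w x) (hgc : ContinuousOn g (Icc 0 1))
    (hp : ∀ x ∈ Icc (0 : ℝ) 1, HasDerivAt p (p' x) x)
    (hp' : ∀ x ∈ Icc (0 : ℝ) 1, HasDerivAt p' (p'' x) x)
    (hp''c : ContinuousOn p'' (Icc 0 1)) (hp0 : p 0 = 0) (hp1 : p 1 = 0)
    (hpde : ∀ x ∈ Icc (0 : ℝ) 1, -p'' x + w x * p x = g x) :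
    (π ^ 2 + wl) * √(∫ x in (0 : ℝ)..1, p x ^ 2) ≤ √(∫ x in (0 : ℝ)..1, g x ^ 2) := by
  have hpc : ContinuousOn p (Icc 0 1) := fun x hx => (hp x hx).continuousAt.continuousWithinAt
  have hp'c : ContinuousOn p' (Icc 0 1) := fun x hx => (hp' x hx).continuousAt.continuousWithinAt
  set P := √(∫ x in (0 : ℝ)..1, p x ^ 2)
  set G := √(∫ x in (0 : ℝ)..1, g x ^ 2)
  have hsq : (π ^ 2 + wl) * P * P ≤ G * P :=
    calc (π ^ 2 + wl) * P * P
        = π ^ 2 * (∫ x in (0 : ℝ)..1, p x ^ 2) + wl * ∫ x in (0 : ℝ)..1, p x ^ 2 := by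
          rw [mul_assoc, mul_self_sqrt (integral_nonneg zero_le_one fun x _ => sq_nonneg _)]
          ring
      _ ≤ (∫ x in (0 : ℝ)..1, p' x ^ 2) + wl * ∫ x in (0 : ℝ)..1, p x ^ 2 := by
          gcongr
          exact pi_sq_mul_integral_sq_le_integral_deriv_sq hp hp'c hp0 hp1
      _ ≤ ∫ x in (0 : ℝ)..1, g x * p x :=
          integral_deriv_sq_add_mul_integral_sq_le zero_le_one hwb hgc hp hp' hp''c hp0 hp1 hpde
      _ ≤ G * P := integral_mul_le_sqrt_mul_sqrt zero_le_one hgc hpc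
  by_cases hP : P = 0
  · rw [hP, mul_zero]
    exact sqrt_nonneg _
  · exact le_of_mul_le_mul_right hsq ((sqrt_nonneg _).lt_of_ne' hP)

theorem sqrt_integral_sq_le_div_pi_mul {w g p p' p'' : ℝ → ℝ} {wl : ℝ} (hwl : -π ^ 2 < wl)
    (hwb : ∀ x ∈ Icc (0 : ℝ) 1, wl ≤ w x) (hgc : ContinuousOn g (Icc 0 1))
    (hp : ∀ x ∈ Icc (0 : ℝ) 1, HasDerivAt p (p' x) x)
    (hp' : ∀ x ∈ Icc (0 : ℝ) 1, HasDerivAt p' (p'' x) x)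
    (hp''c : ContinuousOn p'' (Icc 0 1)) (hp0 : p 0 = 0) (hp1 : p 1 = 0)
    (hpde : ∀ x ∈ Icc (0 : ℝ) 1, -p'' x + w x * p x = g x) :
    √(∫ x in (0 : ℝ)..1, p x ^ 2) ≤ √(∫ x in (0 : ℝ)..1, g x ^ 2) / (π * (1 + wl / π ^ 2)) := by
  have hπc₁ : π * (1 + wl / π ^ 2) = (π ^ 2 + wl) / π := by
    field_simp
  have hc₁ : 0 < π ^ 2 + wl := by linarith
  rw [hπc₁, le_div_iff₀ (div_pos hc₁ pi_pos), mul_comm]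
  refine le_trans ?_ (mul_sqrt_integral_sq_le_sqrt_integral_sq hwb hgc hp hp' hp''c hp0 hp1 hpde)
  gcongr
  exact div_le_self hc₁.le (by linarith [pi_gt_three])

theorem integral_abs_le_sqrt_add_mul_sqrt {f g p : ℝ → ℝ} {M : ℝ} (hM : 0 ≤ M)
    (hf : ContinuousOn f (Icc 0 1)) (hg : ContinuousOn g (Icc 0 1))
    (hp : ContinuousOn p (Icc 0 1)) (hfgp : ∀ x ∈ Icc (0 : ℝ) 1, |f x| ≤ |g x| + M * |p x|) :
    ∫ x in (0 : ℝ)..1, |f x| ≤ √(∫ x in (0 : ℝ)..1, g x ^ 2) + M * √(∫ x in (0 : ℝ)..1, p x ^ 2) :=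
  calc ∫ x in (0 : ℝ)..1, |f x| ≤ ∫ x in (0 : ℝ)..1, (|g x| + M * |p x|) :=
        integral_mono_on zero_le_one (hf.abs.intervalIntegrable_of_Icc zero_le_one)
          ((hg.abs.add (continuousOn_const.mul hp.abs)).intervalIntegrable_of_Icc zero_le_one) hfgp
    _ = (∫ x in (0 : ℝ)..1, |g x|) + M * ∫ x in (0 : ℝ)..1, |p x| := by
        rw [intervalIntegral.integral_add (hg.abs.intervalIntegrable_of_Icc zero_le_one)
          (by exact (continuousOn_const.mul hp.abs).intervalIntegrable_of_Icc zero_le_one),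
          intervalIntegral.integral_const_mul]
    _ ≤ √(∫ x in (0 : ℝ)..1, g x ^ 2) + M * √(∫ x in (0 : ℝ)..1, p x ^ 2) := by
        gcongr
        · simpa using integral_abs_le_sqrt_mul_sqrt zero_le_one hg
        · simpa using integral_abs_le_sqrt_mul_sqrt zero_le_one hp

theorem abs_mul_sub_le_abs_add_max_abs_mul {wl wu w p g : ℝ} (hl : wl ≤ w) (hu : w ≤ wu) :
    |w * p - g| ≤ |g| + max |wl| |wu| * |p| :=
  calc |w * p - g| ≤ |w| * |p| + |g| := by rw [← abs_mul]; exact abs_sub _ _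
    _ ≤ |g| + max |wl| |wu| * |p| := by
      nlinarith [abs_le_max_abs_abs hl hu, abs_nonneg p]

theorem adjoint_deriv_uniform_bound_general
    (wl wu : ℝ) (hwl : -π ^ 2 < wl)
    (w g : ℝ → ℝ)
    (hgc : ContinuousOn g (Set.Icc 0 1))
    (hwb : ∀ x ∈ Set.Icc (0:ℝ) 1, wl ≤ w x ∧ w x ≤ wu)
    (p p' p'' : ℝ → ℝ)
    (hp : ∀ x ∈ Set.Icc (0:ℝ) 1, HasDerivAt p (p' x) x)
    (hp' : ∀ x ∈ Set.Icc (0:ℝ) 1, HasDerivAt p' (p'' x) x)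
    (hp''c : ContinuousOn p'' (Set.Icc 0 1))
    (hp0 : p 0 = 0) (hp1 : p 1 = 0)
    (hpde : ∀ x ∈ Set.Icc (0:ℝ) 1, -p'' x + w x * p x = g x) :
    ∀ x ∈ Set.Icc (0:ℝ) 1,
      |p' x| ≤ (1 + max |wl| |wu| / (π * (1 + wl / π ^ 2))) *
        Real.sqrt (∫ x in (0:ℝ)..1, g x ^ 2) := by
  intro x hx
  have hpc : ContinuousOn p (Icc 0 1) := fun y hy => (hp y hy).continuousAt.continuousWithinAt
  obtain ⟨ξ, hξ, hp'ξ⟩ := exists_hasDerivAt_eq_zero zero_lt_one hpc (hp0.trans hp1.symm)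
    fun y hy => hp y (Ioo_subset_Icc_self hy)
  have hp''_le : ∀ y ∈ Icc (0 : ℝ) 1, |p'' y| ≤ |g y| + max |wl| |wu| * |p y| := by
    intro y hy
    have hp''y : p'' y = w y * p y - g y := by linarith [hpde y hy]
    rw [hp''y]
    exact abs_mul_sub_le_abs_add_max_abs_mul (hwb y hy).1 (hwb y hy).2
  have hM : 0 ≤ max |wl| |wu| := (abs_nonneg _).trans (le_max_left _ _)
  calc |p' x| = |p' x - p' ξ| := by rw [hp'ξ, sub_zero]
    _ ≤ ∫ y in (0 : ℝ)..1, |p'' y| :=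
        abs_sub_le_integral_abs_deriv hp' hp''c hx (Ioo_subset_Icc_self hξ)
    _ ≤ √(∫ x in (0 : ℝ)..1, g x ^ 2) + max |wl| |wu| * √(∫ x in (0 : ℝ)..1, p x ^ 2) :=
        integral_abs_le_sqrt_add_mul_sqrt hM hp''c hgc hpc hp''_le
    _ ≤ √(∫ x in (0 : ℝ)..1, g x ^ 2) + max |wl| |wu| *
          (√(∫ x in (0 : ℝ)..1, g x ^ 2) / (π * (1 + wl / π ^ 2))) := by
        gcongr
        exact sqrt_integral_sq_le_div_pi_mul hwl (fun y hy => (hwb y hy).1) hgc hp hp' hp''c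
          hp0 hp1 hpde
    _ = (1 + max |wl| |wu| / (π * (1 + wl / π ^ 2))) * √(∫ x in (0 : ℝ)..1, g x ^ 2) := by
        ring

theorem adjoint_deriv_uniform_bound
    (wl wu : ℝ) (hwl : -π ^ 2 < wl) (hwlu : wl ≤ wu)
    (w g : ℝ → ℝ)
    (hwc : ContinuousOn w (Set.Icc 0 1)) (hgc : ContinuousOn g (Set.Icc 0 1))
    (hwb : ∀ x ∈ Set.Icc (0:ℝ) 1, wl ≤ w x ∧ w x ≤ wu)
    (p p' p'' : ℝ → ℝ)
    (hp : ∀ x ∈ Set.Icc (0:ℝ) 1, HasDerivAt p (p' x) x)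
    (hp' : ∀ x ∈ Set.Icc (0:ℝ) 1, HasDerivAt p' (p'' x) x)
    (hp''c : ContinuousOn p'' (Set.Icc 0 1))
    (hp0 : p 0 = 0) (hp1 : p 1 = 0)
    (hpde : ∀ x ∈ Set.Icc (0:ℝ) 1, -p'' x + w x * p x = g x) :
    ∀ x ∈ Set.Icc (0:ℝ) 1,
      |p' x| ≤ (1 + max |wl| |wu| / (π * (1 + wl / π ^ 2))) *
        Real.sqrt (∫ x in (0:ℝ)..1, g x ^ 2) :=
  adjoint_deriv_uniform_bound_general wl wu hwl w g hgc hwb p p' p'' hp hp' hp''c hp0 hp1 hpde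
end
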